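/- arXiv:1311.1339 — 9 statements merged into one kernel-verified Lean document; each statement's English description precedes it below -/
import Mathlib

section
/- For every n ≥ 0, the code C_{N,K}(n) is a zero-padded zero-error code for DTPC(N,K), and every zero-padded zero-error code of length n for DTPC(N,K) has cardinality at most |C_{N,K}(n)|; that is, C_{N,K}(n) is a largest zero-padded zero-error code of length n. -/
/-- `Produces K x z`: the input sequence `x` (numbers of particles sent per slot) can
produce the output sequence `z` (of length `x.length + K`, numbers of particles received
per slot) through the channel DTPC(·, K): there are delays `d i j` (the number of
particles sent in slot `i` that are delayed by `j ∈ {0, …, K}` slots) accounting for all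
sent particles, such that the particles received in slot `t` are exactly those sent in
slot `i` and delayed by `j` slots with `i + j = t` (slots indexed from `0`). -/
def Produces (K : ℕ) (x z : List ℕ) : Prop :=
  z.length = x.length + K ∧
  ∃ d : ℕ → ℕ → ℕ,
    (∀ i < x.length, ∑ j ∈ Finset.range (K + 1), d i j = x.getD i 0) ∧
    (∀ t < x.length + K,
      z.getD t 0 =
        ∑ i ∈ Finset.range x.length, ∑ j ∈ Finset.range (K + 1),
          if i + j = t then d i j else 0)

/-- A code of length `n` for DTPC(N, K): a set of sequences over `{0, 1, …, N}` of length `n`. -/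
def IsCode (N n : ℕ) (C : Finset (List ℕ)) : Prop :=
  ∀ x ∈ C, x.length = n ∧ ∀ a ∈ x, a ≤ N

/-- Zero-error code for DTPC(N, K): for every `m ≥ 1`, no two distinct concatenations of
`m` codewords can produce the same channel output. -/
def IsZeroError (N K n : ℕ) (C : Finset (List ℕ)) : Prop :=
  IsCode N n C ∧
  ∀ L₁ L₂ : List (List ℕ),
    L₁.length = L₂.length → 1 ≤ L₁.length →
    (∀ w ∈ L₁, w ∈ C) → (∀ w ∈ L₂, w ∈ C) →
    L₁.flatten ≠ L₂.flatten →
    ∀ z : List ℕ, ¬ (Produces K L₁.flatten z ∧ Produces K L₂.flatten z)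

/-- Zero-padded code: every codeword ends with `min n K` zeros. -/
def IsZeroPadded (K n : ℕ) (C : Finset (List ℕ)) : Prop :=
  ∀ x ∈ C, List.replicate (min n K) 0 <:+ x

/-- The recursively defined codes `C_{N,K}(n)`: for `n ≤ K` the only codeword is `0^n`;
for `n > K`, `C_{N,K}(n) = (N ∘ C_{N,K}(n-1)) ∪ ⋃_{i<N} (i ∘ 0^K ∘ C_{N,K}(n-K-1))`. -/
def CNK (N K : ℕ) : ℕ → Finset (List ℕ)
  | n =>
    if _h : n ≤ K then {List.replicate n 0}
    else
      ((CNK N K (n - 1)).image fun v => N :: v) ∪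
        (Finset.range N).biUnion fun i =>
          (CNK N K (n - K - 1)).image fun v => (i :: List.replicate K 0) ++ v
  decreasing_by
    · omega
    · omega

/-!
Everything is read off prefix sums `S`. An input `x` can produce `z` exactly when
`S z s ≤ S x s ≤ S z (s + K)` for all `s`: necessity is counting, sufficiency comes from
matching particles first-in first-out.

Two concatenations `x ≠ y` of codewords of `C_{N,K}(n)` first differ, at some slot `q`, at the
start of a block; the smaller entry there is less than `N`, so it starts a block `i 0^K`, say in
`x`. Then `S x` stalls for `K` slots and `S y (q + 1) > S x (q + 1 + K)`, whereas a common
output `z` would give `S y s ≤ S z (s + K) ≤ S x (s + K)`.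

Conversely, every zero-padded word `u` over `{0, …, N}` arises from some `c ∈ C_{N,K}(n)` by
delays of at most `K`, with `c` built greedily: its first entry collects `min N (S u (K + 1))`
units from the first `K + 1` slots of `u`. Then `u` produces `0^K ++ c`, and in a zero-error code
distinct codewords have distinct outputs, so `u ↦ c` is injective.
-/

def prefixSum (l : List ℕ) (s : ℕ) : ℕ := (l.take s).sum

@[simp] theorem prefixSum_zero (l : List ℕ) : prefixSum l 0 = 0 := by simp [prefixSum]

@[simp] theorem prefixSum_nil (s : ℕ) : prefixSum [] s = 0 := by simp [prefixSum]

@[simp] theorem prefixSum_cons_succ (a : ℕ) (l : List ℕ) (s : ℕ) :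
    prefixSum (a :: l) (s + 1) = a + prefixSum l s := by
  simp [prefixSum]

theorem prefixSum_append (l₁ l₂ : List ℕ) (s : ℕ) :
    prefixSum (l₁ ++ l₂) s = prefixSum l₁ s + prefixSum l₂ (s - l₁.length) := by
  simp [prefixSum, List.take_append]

@[simp] theorem prefixSum_replicate_zero (m s : ℕ) : prefixSum (List.replicate m 0) s = 0 := by
  simp [prefixSum, List.take_replicate]

theorem prefixSum_mono (l : List ℕ) : Monotone (prefixSum l) := fun _ _ h =>
  (List.take_sublist_take_left h).sum_le_sum fun _ _ => Nat.zero_le _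

theorem prefixSum_eq_sum_range (l : List ℕ) (s : ℕ) :
    prefixSum l s = ∑ i ∈ Finset.range s, l.getD i 0 := by
  induction s with
  | zero => simp
  | succ s ih =>
    rw [Finset.sum_range_succ, ← ih, prefixSum, List.take_add_one, List.sum_append, prefixSum,
      List.getD_eq_getElem?_getD]
    cases l[s]? <;> simp

theorem prefixSum_eq_zero_of_replicate_prefix {K : ℕ} {l : List ℕ}
    (h : List.replicate K 0 <+: l) : prefixSum l K = 0 := by
  obtain ⟨r, rfl⟩ := h
  simp [prefixSum_append]

def removeFront : ℕ → List ℕ → List ℕ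
  | _, [] => []
  | c, a :: l => (a - c) :: removeFront (c - a) l

@[simp] theorem removeFront_nil (c : ℕ) : removeFront c [] = [] := rfl

@[simp] theorem removeFront_cons (c a : ℕ) (l : List ℕ) :
    removeFront c (a :: l) = (a - c) :: removeFront (c - a) l := rfl

@[simp] theorem length_removeFront (c : ℕ) (l : List ℕ) :
    (removeFront c l).length = l.length := by
  induction l generalizing c <;> simp [*]

@[simp] theorem removeFront_zero (l : List ℕ) : removeFront 0 l = l := by
  induction l <;> simp [*]

theorem removeFront_append (c : ℕ) (l₁ l₂ : List ℕ) :
    removeFront c (l₁ ++ l₂) = removeFront c l₁ ++ removeFront (c - l₁.sum) l₂ := by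
  induction l₁ generalizing c with
  | nil => simp
  | cons a l ih => simp [ih, Nat.sub_sub]

theorem removeFront_of_sum_le {c : ℕ} {l : List ℕ} (h : l.sum ≤ c) :
    removeFront c l = List.replicate l.length 0 := by
  induction l generalizing c with
  | nil => rfl
  | cons a l ih =>
    simp only [List.sum_cons] at h
    simp [ih (show l.sum ≤ c - a by omega), List.replicate_succ, show a ≤ c by omega]

theorem removeFront_prefixSum {K : ℕ} {l : List ℕ} (h : K ≤ l.length) :
    removeFront (prefixSum l K) l = List.replicate K 0 ++ l.drop K := by
  have := removeFront_append (l.take K).sum (l.take K) (l.drop K)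
  rwa [List.take_append_drop, removeFront_of_sum_le le_rfl, Nat.sub_self, removeFront_zero,
    List.length_take_of_le h] at this

theorem getD_removeFront (c : ℕ) (l : List ℕ) (t : ℕ) :
    (removeFront c l).getD t 0 = l.getD t 0 - (c - prefixSum l t) := by
  induction l generalizing c t with
  | nil => simp
  | cons a l ih =>
    cases t with
    | zero => simp
    | succ t =>
      simp only [removeFront_cons, List.getD_cons_succ, prefixSum_cons_succ, ih, Nat.sub_sub]

theorem prefixSum_removeFront (c : ℕ) (l : List ℕ) (s : ℕ) :
    prefixSum (removeFront c l) s = prefixSum l s - c := by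
  induction l generalizing c s with
  | nil => simp
  | cons a l ih => cases s <;> simp [ih]; omega

theorem le_of_mem_removeFront {c N : ℕ} {l : List ℕ} (h : ∀ a ∈ l, a ≤ N) :
    ∀ a ∈ removeFront c l, a ≤ N := by
  induction l generalizing c with
  | nil => simp
  | cons b l ih =>
    simp only [List.forall_mem_cons, removeFront_cons] at h ⊢
    exact ⟨by omega, ih h.2⟩

/-- Prefix-sum form of the channel: `z` is `x` with every unit delayed by at most `K` slots. -/
def DelayedWithin (K : ℕ) (x z : List ℕ) : Prop :=
  ∀ s, prefixSum z s ≤ prefixSum x s ∧ prefixSum x s ≤ prefixSum z (s + K)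

open Finset in
theorem Produces.exists_flow {K : ℕ} {x z : List ℕ} (h : Produces K x z) :
    ∃ d : ℕ → ℕ → ℕ, (∀ i < x.length, ∑ j ∈ range (K + 1), d i j = x.getD i 0) ∧
      ∀ t, z.getD t 0 = ∑ i ∈ range x.length, ∑ j ∈ range (K + 1),
        if i + j = t then d i j else 0 := by
  obtain ⟨hlen, d, hrow, hcol⟩ := h
  refine ⟨d, hrow, fun t => ?_⟩
  by_cases ht : t < x.length + K
  · exact hcol t ht
  · rw [List.getD_eq_default _ _ (by omega)]
    refine (sum_eq_zero fun i hi => sum_eq_zero fun j hj => if_neg ?_).symm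
    simp only [mem_range] at hi hj
    omega

open Finset in
theorem Produces.delayedWithin {K : ℕ} {x z : List ℕ} (h : Produces K x z) :
    DelayedWithin K x z := by
  obtain ⟨d, hrow, hcol⟩ := h.exists_flow
  have hz : ∀ s, prefixSum z s = ∑ i ∈ range x.length, ∑ j ∈ range (K + 1),
      if i + j < s then d i j else 0 := by
    intro s
    simp only [prefixSum_eq_sum_range, hcol]
    rw [sum_comm]
    refine sum_congr rfl fun i _ => ?_
    rw [sum_comm]
    simp [sum_ite_eq]
  have hx : ∀ s, prefixSum x s = ∑ i ∈ range x.length, ∑ j ∈ range (K + 1),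
      if i < s then d i j else 0 := by
    intro s
    have hfilter : (range s).filter (· < x.length) = (range x.length).filter (· < s) := by
      ext i; simp only [mem_filter, mem_range]; omega
    calc prefixSum x s = ∑ i ∈ range s, if i < x.length then x.getD i 0 else 0 := by
          rw [prefixSum_eq_sum_range]
          refine sum_congr rfl fun i _ => ?_
          split_ifs with hi
          · rfl
          · exact List.getD_eq_default _ _ (by omega)
      _ = ∑ i ∈ range x.length, if i < s then x.getD i 0 else 0 := by
          rw [← sum_filter, hfilter, sum_filter]
      _ = _ := by
          refine sum_congr rfl fun i hi => ?_
          split_ifs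
          · exact (hrow i (mem_range.1 hi)).symm
          · simp
  intro s
  rw [hz, hx, hz]
  constructor <;>
    refine sum_le_sum fun i _ => sum_le_sum fun j hj => ?_ <;>
    simp only [mem_range] at hj <;>
    split_ifs <;> omega

open Finset in
theorem Produces.cons {K a b : ℕ} {x l : List ℕ} (h : Produces K x (removeFront (a - b) l))
    (hba : b ≤ a) (haK : a ≤ prefixSum (b :: l) (K + 1)) : Produces K (a :: x) (b :: l) := by
  obtain ⟨hlen, d, hrow, hcol⟩ := h
  set w := removeFront a (b :: l)
  have hw : w = 0 :: removeFront (a - b) l := by simp [w, Nat.sub_eq_zero_of_le hba]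
  have hw_le : ∀ t, w.getD t 0 ≤ (b :: l).getD t 0 := fun t => by
    rw [getD_removeFront]; omega
  -- the first `a` particles fill the units removed from the front of `b :: l`
  refine ⟨by simp at hlen ⊢; omega,
    fun i j => match i with
      | 0 => (b :: l).getD j 0 - w.getD j 0
      | i + 1 => d i j, fun i hi => ?_, fun t ht => ?_⟩
  · cases i with
    | zero =>
      rw [sum_tsub_distrib _ fun j _ => hw_le j, ← prefixSum_eq_sum_range,
        ← prefixSum_eq_sum_range, prefixSum_removeFront, List.getD_cons_zero]
      omega
    | succ i => exact hrow i (by simpa using hi)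
  · have hdelayed : (∑ i ∈ range x.length, ∑ j ∈ range (K + 1),
        if i + 1 + j = t then d i j else 0) = w.getD t 0 := by
      cases t with
      | zero => simp [hw]
      | succ t =>
        rw [hw, List.getD_cons_succ, hcol t (by simp at ht hlen; omega)]
        refine sum_congr rfl fun i _ => sum_congr rfl fun j _ => ?_
        simp only [show i + 1 + j = t + 1 ↔ i + j = t by omega]
    rw [List.length_cons, sum_range_succ']
    simp only [zero_add, hdelayed, sum_ite_eq', mem_range]
    have hwt : w.getD t 0 = _ := getD_removeFront a (b :: l) t
    split_ifs with htK
    · omega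
    · have := prefixSum_mono (b :: l) (show K + 1 ≤ t by omega)
      omega

theorem Produces.of_delayedWithin {K : ℕ} {x z : List ℕ} (hlen : z.length = x.length + K)
    (h : DelayedWithin K x z) : Produces K x z := by
  induction x generalizing z with
  | nil =>
    refine ⟨by simpa using hlen, fun _ _ => 0, by simp, fun t _ => ?_⟩
    have hzero := (h (t + 1)).1
    rw [prefixSum_nil, Nat.le_zero, prefixSum_eq_sum_range, Finset.sum_eq_zero_iff] at hzero
    simpa using hzero t (by simp)
  | cons a x ih =>
    obtain ⟨b, l, rfl⟩ := List.exists_cons_of_length_pos (by simp at hlen; omega : 0 < z.length)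
    have hba : b ≤ a := by simpa using (h 1).1
    refine (ih (by simp at hlen ⊢; omega) fun s => ?_).cons hba
      (by simpa [add_comm] using (h 1).2)
    have := h (s + 1)
    simp only [prefixSum_cons_succ, show s + 1 + K = s + K + 1 by omega] at this
    rw [prefixSum_removeFront, prefixSum_removeFront]
    omega

theorem produces_iff {K : ℕ} {x z : List ℕ} :
    Produces K x z ↔ z.length = x.length + K ∧ DelayedWithin K x z :=
  ⟨fun h => ⟨h.1, h.delayedWithin⟩, fun ⟨hlen, h⟩ => .of_delayedWithin hlen h⟩

namespace DelayedWithin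

variable {K : ℕ}

theorem refl (x : List ℕ) : DelayedWithin K x x := fun s =>
  ⟨le_rfl, prefixSum_mono x (Nat.le_add_right s K)⟩

theorem append_left {x z : List ℕ} (h : DelayedWithin K x z) (p : List ℕ) :
    DelayedWithin K (p ++ x) (p ++ z) := by
  intro s
  simp only [prefixSum_append]
  refine ⟨Nat.add_le_add_left (h _).1 _, Nat.add_le_add (prefixSum_mono p (by omega)) ?_⟩
  rcases Nat.lt_or_ge s p.length with hs | hs
  · simp [Nat.sub_eq_zero_of_le hs.le]
  · simpa [show s + K - p.length = s - p.length + K by omega] using (h _).2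

theorem replicate_append {c u : List ℕ} (h : DelayedWithin K c u) :
    DelayedWithin K u (List.replicate K 0 ++ c) := by
  intro s
  simp only [prefixSum_append, prefixSum_replicate_zero, List.length_replicate, zero_add,
    Nat.add_sub_cancel]
  refine ⟨?_, (h s).1⟩
  rcases Nat.lt_or_ge s K with hs | hs
  · simp [Nat.sub_eq_zero_of_le hs.le]
  · simpa [Nat.sub_add_cancel hs] using (h (s - K)).2

theorem cons_of_removeFront {c l : List ℕ} {a c₀ : ℕ}
    (h : DelayedWithin K c (removeFront (c₀ - a) l)) (ha : a ≤ c₀)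
    (hc₀ : c₀ ≤ prefixSum (a :: l) (K + 1)) : DelayedWithin K (c₀ :: c) (a :: l) := by
  rintro (_ | s)
  · simp
  have hmono := prefixSum_mono l (show K ≤ s + K by omega)
  have := h s
  simp only [prefixSum_cons_succ, prefixSum_removeFront] at this hc₀ ⊢
  rw [show s + 1 + K = s + K + 1 by omega, prefixSum_cons_succ]
  omega

end DelayedWithin

/-- Where `x` and `y` first differ, if the entry of `x` is the smaller one, it is followed in `x`
by `K` zeros; moreover neither list is a proper prefix of the other. -/
def ZerosAfterFirstDiff (K : ℕ) : List ℕ → List ℕ → Prop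
  | [], [] => True
  | a :: x, b :: y => (a < b → List.replicate K 0 <+: x) ∧ (a = b → ZerosAfterFirstDiff K x y)
  | _, _ => False

namespace ZerosAfterFirstDiff

variable {K : ℕ}

theorem refl : ∀ x : List ℕ, ZerosAfterFirstDiff K x x
  | [] => trivial
  | _ :: x => ⟨fun h => absurd h (lt_irrefl _), fun _ => refl x⟩

theorem append {x y s t : List ℕ} (hxy : ZerosAfterFirstDiff K x y)
    (hst : ZerosAfterFirstDiff K s t) : ZerosAfterFirstDiff K (x ++ s) (y ++ t) := by
  induction x generalizing y with
  | nil => cases y <;> first | exact hst | exact hxy.elim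
  | cons a x ih =>
    cases y with
    | nil => exact hxy.elim
    | cons b y =>
      exact ⟨fun h => (hxy.1 h).trans (List.prefix_append x s), fun h => ih (hxy.2 h)⟩

theorem flatten {L₁ L₂ : List (List ℕ)}
    (h : List.Forall₂ (ZerosAfterFirstDiff K) L₁ L₂) :
    ZerosAfterFirstDiff K L₁.flatten L₂.flatten := by
  induction h with
  | nil => trivial
  | cons huv _ ih => exact huv.append ih

theorem eq_of_prefixSum_le {x y : List ℕ} (hxy : ZerosAfterFirstDiff K x y)
    (hyx : ZerosAfterFirstDiff K y x) (hx : ∀ s, prefixSum x s ≤ prefixSum y (s + K))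
    (hy : ∀ s, prefixSum y s ≤ prefixSum x (s + K)) : x = y := by
  induction x generalizing y with
  | nil => cases y <;> first | rfl | exact hxy.elim
  | cons a x ih =>
    cases y with
    | nil => exact hxy.elim
    | cons b y =>
      have hshift : ∀ l : List ℕ, ∀ s, prefixSum l (s + 1 + K) = prefixSum l (s + K + 1) :=
        fun l s => by rw [Nat.add_right_comm]
      rcases lt_trichotomy a b with hab | rfl | hab
      · have := hy 1
        rw [Nat.add_comm 1 K] at this
        simp [prefixSum_eq_zero_of_replicate_prefix (hxy.1 hab)] at this
        omega
      · congr 1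
        refine ih (hxy.2 rfl) (hyx.2 rfl) (fun s => ?_) (fun s => ?_)
        · simpa [hshift] using hx (s + 1)
        · simpa [hshift] using hy (s + 1)
      · have := hx 1
        rw [Nat.add_comm 1 K] at this
        simp [prefixSum_eq_zero_of_replicate_prefix (hyx.1 hab)] at this
        omega

end ZerosAfterFirstDiff

section CNK

variable {N K n : ℕ} {u v : List ℕ}

theorem mem_CNK_of_le (hn : n ≤ K) : u ∈ CNK N K n ↔ u = List.replicate n 0 := by
  rw [CNK, dif_pos hn, Finset.mem_singleton]

theorem mem_CNK_of_lt (hn : K < n) :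
    u ∈ CNK N K n ↔ (∃ v ∈ CNK N K (n - 1), u = N :: v) ∨
      ∃ i < N, ∃ v ∈ CNK N K (n - K - 1), u = i :: (List.replicate K 0 ++ v) := by
  rw [CNK, dif_neg (by omega)]
  simp [eq_comm]

theorem length_of_mem_CNK (hu : u ∈ CNK N K n) : u.length = n := by
  induction n using Nat.strong_induction_on generalizing u with
  | _ n ih =>
    rcases le_or_gt n K with hn | hn
    · simp [(mem_CNK_of_le hn).1 hu]
    · rcases (mem_CNK_of_lt hn).1 hu with ⟨v, hv, rfl⟩ | ⟨i, -, v, hv, rfl⟩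
      · simp [ih _ (by omega) hv]; omega
      · simp [ih _ (by omega) hv]; omega

theorem le_of_mem_CNK (hu : u ∈ CNK N K n) : ∀ a ∈ u, a ≤ N := by
  induction n using Nat.strong_induction_on generalizing u with
  | _ n ih =>
    rcases le_or_gt n K with hn | hn
    · simp +contextual [(mem_CNK_of_le hn).1 hu]
    · rcases (mem_CNK_of_lt hn).1 hu with ⟨v, hv, rfl⟩ | ⟨i, hi, v, hv, rfl⟩
      · simpa using ih _ (by omega) hv
      · have hv' := ih _ (by omega) hv
        simp only [List.mem_cons, List.mem_append, List.mem_replicate]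
        rintro a (rfl | ⟨-, rfl⟩ | ha)
        exacts [hi.le, Nat.zero_le N, hv' a ha]

theorem replicate_suffix_of_mem_CNK (hu : u ∈ CNK N K n) :
    List.replicate (min n K) 0 <:+ u := by
  induction n using Nat.strong_induction_on generalizing u with
  | _ n ih =>
    rcases le_or_gt n K with hn | hn
    · simp [(mem_CNK_of_le hn).1 hu, hn]
    rw [min_eq_right hn.le]
    rcases (mem_CNK_of_lt hn).1 hu with ⟨v, hv, rfl⟩ | ⟨i, -, v, hv, rfl⟩
    · simpa [min_eq_right (show K ≤ n - 1 by omega)] using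
        (ih _ (by omega) hv).trans (List.suffix_cons N v)
    · refine List.IsSuffix.trans ?_ (List.suffix_cons i _)
      have hv' := ih _ (by omega) hv
      rcases le_total K (n - K - 1) with hK | hK
      · exact (min_eq_right hK ▸ hv').trans (List.suffix_append _ v)
      · rw [min_eq_left hK, ← length_of_mem_CNK hv] at hv'
        rw [← hv'.eq_of_length (by simp), ← List.replicate_add, add_comm, List.replicate_add]
        exact List.suffix_append _ _

theorem zerosAfterFirstDiff_of_mem_CNK (hu : u ∈ CNK N K n) (hv : v ∈ CNK N K n) :
    ZerosAfterFirstDiff K u v := by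
  induction n using Nat.strong_induction_on generalizing u v with
  | _ n ih =>
    rcases le_or_gt n K with hn | hn
    · rw [(mem_CNK_of_le hn).1 hu, (mem_CNK_of_le hn).1 hv]
      exact .refl _
    rcases (mem_CNK_of_lt hn).1 hu with ⟨u', hu', rfl⟩ | ⟨i, hi, u', hu', rfl⟩ <;>
      rcases (mem_CNK_of_lt hn).1 hv with ⟨v', hv', rfl⟩ | ⟨j, hj, v', hv', rfl⟩
    · exact ⟨fun h => absurd h (lt_irrefl N), fun _ => ih _ (by omega) hu' hv'⟩
    · exact ⟨fun h => absurd hj h.not_gt, fun h => absurd h hj.ne'⟩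
    · exact ⟨fun _ => List.prefix_append _ _, fun h => absurd h hi.ne⟩
    · exact ⟨fun _ => List.prefix_append _ _,
        fun _ => (ZerosAfterFirstDiff.refl _).append (ih _ (by omega) hu' hv')⟩

theorem zerosAfterFirstDiff_flatten_of_mem_CNK {L₁ L₂ : List (List ℕ)}
    (hlen : L₁.length = L₂.length) (h₁ : ∀ w ∈ L₁, w ∈ CNK N K n)
    (h₂ : ∀ w ∈ L₂, w ∈ CNK N K n) :
    ZerosAfterFirstDiff K L₁.flatten L₂.flatten :=
  .flatten <| List.forall₂_iff_zip.2 ⟨hlen, fun hw => zerosAfterFirstDiff_of_mem_CNK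
    (h₁ _ (List.of_mem_zip hw).1) (h₂ _ (List.of_mem_zip hw).2)⟩

theorem CNK_isZeroError : IsZeroError N K n (CNK N K n) := by
  refine ⟨fun u hu => ⟨length_of_mem_CNK hu, le_of_mem_CNK hu⟩,
    fun L₁ L₂ hlen _ h₁ h₂ hne z ⟨hz₁, hz₂⟩ => hne ?_⟩
  have hd₁ := (produces_iff.1 hz₁).2
  have hd₂ := (produces_iff.1 hz₂).2
  exact (zerosAfterFirstDiff_flatten_of_mem_CNK hlen h₁ h₂).eq_of_prefixSum_le
    (zerosAfterFirstDiff_flatten_of_mem_CNK hlen.symm h₂ h₁)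
    (fun s => (hd₁ s).2.trans (hd₂ (s + K)).1) (fun s => (hd₂ s).2.trans (hd₁ (s + K)).1)

theorem exists_mem_CNK_delayedWithin (hlen : u.length = n) (hle : ∀ a ∈ u, a ≤ N)
    (hpad : List.replicate (min n K) 0 <:+ u) : ∃ c ∈ CNK N K n, DelayedWithin K c u := by
  induction n using Nat.strong_induction_on generalizing u with
  | _ n ih =>
    rcases le_or_gt n K with hn | hn
    · rw [min_eq_left hn] at hpad
      exact ⟨u, (mem_CNK_of_le hn).2 (hpad.eq_of_length (by simp [hlen])).symm, .refl u⟩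
    obtain ⟨a, l, rfl⟩ := List.exists_cons_of_length_pos (by omega : 0 < u.length)
    have hl : l.length = n - 1 := by simp at hlen; omega
    have hlpad : List.replicate K 0 <:+ l := by
      rcases List.suffix_cons_iff.1 (min_eq_right hn.le ▸ hpad) with h | h
      · exact absurd (congrArg List.length h) (by simp; omega)
      · exact h
    have ha : a ≤ N := hle a List.mem_cons_self
    have hlle : ∀ b ∈ l, b ≤ N := fun b hb => hle b (List.mem_cons_of_mem a hb)
    by_cases hN : N ≤ prefixSum (a :: l) (K + 1)
    · obtain ⟨p, rfl⟩ := hlpad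
      obtain ⟨c, hc, hdel⟩ := ih (n - 1) (by omega)
        (u := removeFront (N - a) (p ++ List.replicate K 0)) (by simpa using hl)
        (le_of_mem_removeFront hlle) (by
          rw [min_eq_right (by omega), removeFront_append,
            removeFront_of_sum_le (l := List.replicate K 0) (by simp)]
          simp)
      exact ⟨N :: c, (mem_CNK_of_lt hn).2 (.inl ⟨c, hc, rfl⟩),
        hdel.cons_of_removeFront ha hN⟩
    · set S := prefixSum (a :: l) (K + 1)
      obtain ⟨c, hc, hdel⟩ := ih (n - K - 1) (by omega) (u := l.drop K) (by simp; omega)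
        (fun b hb => hlle b (List.mem_of_mem_drop hb))
        (List.suffix_of_suffix_length_le
          ((List.suffix_replicate_iff.2 ⟨by simp, by simp⟩).trans hlpad) (List.drop_suffix K l)
          (by simp; omega))
      refine ⟨S :: (List.replicate K 0 ++ c),
        (mem_CNK_of_lt hn).2 (.inr ⟨S, by omega, c, hc, rfl⟩),
        DelayedWithin.cons_of_removeFront ?_ (by simp [S]) le_rfl⟩
      rw [show S - a = prefixSum l K by simp [S], removeFront_prefixSum (by omega)]
      exact hdel.append_left _

theorem exists_mem_CNK_produces (hlen : u.length = n) (hle : ∀ a ∈ u, a ≤ N)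
    (hpad : List.replicate (min n K) 0 <:+ u) :
    ∃ c ∈ CNK N K n, Produces K u (List.replicate K 0 ++ c) := by
  obtain ⟨c, hc, hdel⟩ := exists_mem_CNK_delayedWithin hlen hle hpad
  exact ⟨c, hc, produces_iff.2
    ⟨by simp [length_of_mem_CNK hc, hlen, add_comm], hdel.replicate_append⟩⟩

end CNK

theorem IsZeroError.eq_of_produces {N K n : ℕ} {C : Finset (List ℕ)} (hC : IsZeroError N K n C)
    {u v z : List ℕ} (hu : u ∈ C) (hv : v ∈ C) (huz : Produces K u z) (hvz : Produces K v z) :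
    u = v := by
  by_contra hne
  exact hC.2 [u] [v] rfl le_rfl (by simpa) (by simpa) (by simpa) z (by simpa using ⟨huz, hvz⟩)

theorem CNK_largest_zero_padded_zero_error_code_general (N K : ℕ) (n : ℕ) :
    (IsZeroPadded K n (CNK N K n) ∧ IsZeroError N K n (CNK N K n)) ∧
      ∀ C : Finset (List ℕ), IsZeroPadded K n C → IsZeroError N K n C →
        C.card ≤ (CNK N K n).card := by
  refine ⟨⟨fun u hu => replicate_suffix_of_mem_CNK hu, CNK_isZeroError⟩,
    fun C hpad hC => ?_⟩
  have hcode : ∀ u ∈ C, ∃ c ∈ CNK N K n, Produces K u (List.replicate K 0 ++ c) :=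
    fun u hu => exists_mem_CNK_produces (hC.1 u hu).1 (hC.1 u hu).2 (hpad u hu)
  choose! enc henc hprod using hcode
  refine Finset.card_le_card_of_injOn enc henc fun u hu v hv huv => ?_
  exact hC.eq_of_produces hu hv (hprod u hu) (huv ▸ hprod v hv)

/-- `C_{N,K}(n)` is a zero-padded zero-error code for DTPC(N, K), and it is a largest
such code: every zero-padded zero-error code of length `n` has cardinality at most
`|C_{N,K}(n)|`. -/
theorem CNK_largest_zero_padded_zero_error_code (N K : ℕ) (hN : 1 ≤ N) (n : ℕ) :
    (IsZeroPadded K n (CNK N K n) ∧ IsZeroError N K n (CNK N K n)) ∧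
      ∀ C : Finset (List ℕ), IsZeroPadded K n C → IsZeroError N K n C →
        C.card ≤ (CNK N K n).card :=
  CNK_largest_zero_padded_zero_error_code_general N K n
end

section
/- Let C be a zero-padded zero-error code of length n > K for DTPC(N,K). Then there exists a zero-padded zero-error code D of length n for DTPC(N,K) with |D| = |C| such that every codeword of D either begins with the symbol N, or begins with the prefix i ∘ 0^K for some i ∈ {0,1,…,N−1}. -/
namespace DTPC

open Finset

def prefixSum (x : List ℕ) (t : ℕ) : ℕ := ∑ s ∈ range t, x.getD s 0

@[simp]
lemma prefixSum_zero (x : List ℕ) : prefixSum x 0 = 0 := rfl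

lemma prefixSum_succ (x : List ℕ) (t : ℕ) :
    prefixSum x (t + 1) = prefixSum x t + x.getD t 0 :=
  sum_range_succ _ _

lemma prefixSum_mono (x : List ℕ) : Monotone (prefixSum x) := fun _ _ h =>
  sum_le_sum_of_subset (range_subset_range.2 h)

lemma prefixSum_min_length (x : List ℕ) (t : ℕ) :
    prefixSum x (min t x.length) = prefixSum x t := by
  refine sum_subset (range_subset_range.2 (min_le_left _ _)) fun s hs hs' => ?_
  simp only [mem_range, lt_min_iff, not_and, not_lt] at hs hs'
  exact List.getD_eq_default _ _ (hs' hs)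

lemma prefixSum_le_prefixSum_length (x : List ℕ) (t : ℕ) :
    prefixSum x t ≤ prefixSum x x.length :=
  prefixSum_min_length x t ▸ prefixSum_mono x (min_le_right _ _)

lemma prefixSum_append_of_le {w : List ℕ} (A : List ℕ) {t : ℕ} (h : t ≤ w.length) :
    prefixSum (w ++ A) t = prefixSum w t :=
  sum_congr rfl fun _ hs => List.getD_append _ _ _ _ ((mem_range.1 hs).trans_le h)

lemma prefixSum_append_length_add (w A : List ℕ) (s : ℕ) :
    prefixSum (w ++ A) (w.length + s) = prefixSum w w.length + prefixSum A s := by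
  rw [prefixSum, sum_range_add, ← prefixSum, prefixSum_append_of_le A le_rfl]
  congr 1
  refine sum_congr rfl fun i _ => ?_
  rw [List.getD_append_right _ _ _ _ (Nat.le_add_right _ _), Nat.add_sub_cancel_left]

lemma prefixSum_replicate_zero (K s : ℕ) : prefixSum (List.replicate K 0) s = 0 :=
  sum_eq_zero fun t _ => by
    rcases lt_or_ge t K with h | h
    · exact List.getD_replicate _ h
    · exact List.getD_eq_default _ _ (by simpa using h)

lemma prefixSum_min_of_suffix {K : ℕ} {x : List ℕ} (hx : List.replicate K 0 <:+ x) (t : ℕ) :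
    prefixSum x (min t (x.length - K)) = prefixSum x t := by
  obtain ⟨u, rfl⟩ := hx
  have hlen : (u ++ List.replicate K 0).length - K = u.length := by simp
  rw [hlen]
  rcases le_total t u.length with h | h
  · rw [min_eq_left h]
  · obtain ⟨s, rfl⟩ := Nat.exists_eq_add_of_le h
    rw [min_eq_right h, prefixSum_append_length_add, prefixSum_replicate_zero,
      prefixSum_append_of_le _ le_rfl, add_zero]

lemma prefixSum_succ_le_add {N : ℕ} {x : List ℕ} (hx : ∀ a ∈ x, a ≤ N) (t : ℕ) :
    prefixSum x (t + 1) ≤ prefixSum x t + N := by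
  rw [prefixSum_succ]
  gcongr
  rcases lt_or_ge t x.length with ht | ht
  · rw [List.getD_eq_getElem _ _ ht]; exact hx _ (List.getElem_mem ht)
  · rw [List.getD_eq_default _ _ ht]; exact Nat.zero_le N

lemma prefixSum_eq_sum_ite (x : List ℕ) (T : ℕ) :
    prefixSum x T = ∑ i ∈ range x.length, if i < T then x.getD i 0 else 0 := by
  rw [← sum_filter, ← prefixSum_min_length, prefixSum]
  congr 1
  ext i
  simp [and_comm]

section Channel

variable {K : ℕ} {x z : List ℕ} {d : ℕ → ℕ → ℕ}

lemma prefixSum_eq_sum_delays (hd : ∀ i < x.length, ∑ j ∈ range (K + 1), d i j = x.getD i 0)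
    (T : ℕ) :
    prefixSum x T = ∑ i ∈ range x.length, ∑ j ∈ range (K + 1), if i < T then d i j else 0 := by
  rw [prefixSum_eq_sum_ite]
  refine sum_congr rfl fun i hi => ?_
  split_ifs
  · exact (hd i (mem_range.1 hi)).symm
  · simp

lemma prefixSum_eq_sum_arrivals (hz : z.length = x.length + K)
    (hzd : ∀ t < x.length + K, z.getD t 0 =
      ∑ i ∈ range x.length, ∑ j ∈ range (K + 1), if i + j = t then d i j else 0) (T : ℕ) :
    prefixSum z T = ∑ i ∈ range x.length, ∑ j ∈ range (K + 1), if i + j < T then d i j else 0 := by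
  have hzd' : ∀ t, z.getD t 0 =
      ∑ i ∈ range x.length, ∑ j ∈ range (K + 1), if i + j = t then d i j else 0 := by
    intro t
    rcases lt_or_ge t (x.length + K) with ht | ht
    · exact hzd t ht
    · rw [List.getD_eq_default _ _ (hz ▸ ht)]
      refine (sum_eq_zero fun i hi => sum_eq_zero fun j hj => if_neg ?_).symm
      have := mem_range.1 hi; have := mem_range.1 hj; omega
  simp_rw [prefixSum, hzd', sum_comm (s := range T), sum_ite_eq, mem_range]

lemma prefixSum_le_of_produces (h : Produces K x z) (t : ℕ) : prefixSum z t ≤ prefixSum x t := by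
  obtain ⟨hz, d, hd, hzd⟩ := h
  rw [prefixSum_eq_sum_arrivals hz hzd, prefixSum_eq_sum_delays hd]
  refine sum_le_sum fun i _ => sum_le_sum fun j _ => ?_
  split_ifs <;> omega

lemma le_prefixSum_add_of_produces (h : Produces K x z) (s : ℕ) :
    prefixSum x s ≤ prefixSum z (s + K) := by
  obtain ⟨hz, d, hd, hzd⟩ := h
  rw [prefixSum_eq_sum_arrivals hz hzd, prefixSum_eq_sum_delays hd]
  refine sum_le_sum fun i _ => sum_le_sum fun j hj => ?_
  have := mem_range.1 hj
  split_ifs <;> omega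

end Channel

def CatchesUp (K : ℕ) (x y : List ℕ) : Prop :=
  ∀ s, prefixSum x s ≤ prefixSum y (s + K)

def Separated (K : ℕ) (x y : List ℕ) : Prop :=
  ¬CatchesUp K x y ∨ ¬CatchesUp K y x

section Separated

variable {K : ℕ} {x y : List ℕ}

lemma catchesUp_refl (K : ℕ) (x : List ℕ) : CatchesUp K x x :=
  fun s => prefixSum_mono x (Nat.le_add_right s K)

lemma Separated.ne (h : Separated K x y) : x ≠ y := by
  rintro rfl
  exact h.elim (· (catchesUp_refl K x)) (· (catchesUp_refl K x))

lemma catchesUp_of_produces {z : List ℕ} (hx : Produces K x z) (hy : Produces K y z) :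
    CatchesUp K x y :=
  fun s => (le_prefixSum_add_of_produces hx s).trans (prefixSum_le_of_produces hy _)

lemma Separated.not_produces (h : Separated K x y) (z : List ℕ) :
    ¬(Produces K x z ∧ Produces K y z) := by
  rintro ⟨hx, hy⟩
  exact h.elim (· (catchesUp_of_produces hx hy)) (· (catchesUp_of_produces hy hx))

end Separated

def ofPrefixSums (F : ℕ → ℕ) (n : ℕ) : List ℕ :=
  (List.range n).map fun t => F (t + 1) - F t

section OfPrefixSums

variable {F : ℕ → ℕ} {n : ℕ}

@[simp]
lemma length_ofPrefixSums (F : ℕ → ℕ) (n : ℕ) : (ofPrefixSums F n).length = n := by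
  simp [ofPrefixSums]

lemma getD_ofPrefixSums {t : ℕ} (ht : t < n) : (ofPrefixSums F n).getD t 0 = F (t + 1) - F t := by
  rw [List.getD_eq_getElem _ _ (by simpa using ht)]
  simp [ofPrefixSums]

lemma prefixSum_ofPrefixSums (hF : Monotone F) (t : ℕ) :
    prefixSum (ofPrefixSums F n) t = F (min t n) - F 0 := by
  rw [← prefixSum_min_length, length_ofPrefixSums, prefixSum, ← sum_range_tsub hF]
  exact sum_congr rfl fun s hs => getD_ofPrefixSums (by have := mem_range.1 hs; omega)

lemma ofPrefixSums_one (F : ℕ → ℕ) : ofPrefixSums F 1 = [F 1 - F 0] := rfl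

lemma ofPrefixSums_add (F : ℕ → ℕ) (a b : ℕ) : ofPrefixSums F (a + b) =
    ofPrefixSums F a ++ (List.range b).map fun t => F (a + t + 1) - F (a + t) := by
  simp [ofPrefixSums, List.range_add, Function.comp_def, add_assoc]

lemma ofPrefixSums_add_of_const {a b : ℕ} (h : ∀ t ≤ b, F (a + t) = F a) :
    ofPrefixSums F (a + b) = ofPrefixSums F a ++ List.replicate b 0 := by
  rw [ofPrefixSums_add]
  congr 1
  refine List.eq_replicate_iff.2 ⟨by simp, fun c hc => ?_⟩
  obtain ⟨t, ht, rfl⟩ := List.mem_map.1 hc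
  rw [List.mem_range] at ht
  rw [add_assoc, h t ht.le, h (t + 1) ht, Nat.sub_self]

end OfPrefixSums

/-- The overlaps of `[a, b)` with the intervals `[W j, W (j + 1))` add up to its overlap with
`[W 0, W m)`. -/
lemma sum_range_min_sub_max {W : ℕ → ℕ} (hW : Monotone W) (a b m : ℕ) :
    ∑ j ∈ range m, (min (W (j + 1)) b - max (W j) a) = min (W m) b - max (W 0) a := by
  induction m with
  | zero => simp
  | succ m ih =>
    rw [sum_range_succ, ih]
    have := hW (Nat.zero_le m)
    have := hW (Nat.le_add_right m 1)
    omega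

section Construction

/- The `k`-th particle sent is received in the slot `t` with `Z t ≤ k < Z (t + 1)`, so the
delays `d i j` are the overlaps of `[P i, P (i + 1))` with `[Z (i + j), Z (i + j + 1))`, where
`P = prefixSum x`. -/

variable {K : ℕ} {x : List ℕ} {Z : ℕ → ℕ}

lemma sum_overlap_delays (hle : ∀ t, Z t ≤ prefixSum x t)
    (hge : ∀ t, prefixSum x t ≤ Z (t + K)) (hZ : Monotone Z) (i : ℕ) :
    ∑ j ∈ range (K + 1), (min (Z (i + j + 1)) (prefixSum x (i + 1)) -
      max (Z (i + j)) (prefixSum x i)) = x.getD i 0 := by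
  have hW : Monotone fun j => Z (i + j) := fun a b h => hZ (by omega)
  refine (sum_range_min_sub_max hW _ _ _).trans ?_
  have h₁ : prefixSum x (i + 1) ≤ Z (i + (K + 1)) := by
    rw [← add_assoc, add_right_comm]; exact hge (i + 1)
  have h₂ := hle i
  have h₃ := prefixSum_succ x i
  simp only [add_zero]
  omega

lemma sum_overlap_arrivals (hle : ∀ t, Z t ≤ prefixSum x t)
    (hge : ∀ t, prefixSum x t ≤ Z (t + K)) (t : ℕ) :
    ∑ i ∈ range x.length, ∑ j ∈ range (K + 1), (if i + j = t then
      min (Z (i + j + 1)) (prefixSum x (i + 1)) - max (Z (i + j)) (prefixSum x i) else 0) =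
      Z (t + 1) - Z t := by
  -- only the delay `t - i` contributes, and the overlap vanishes when it is out of range
  have hi : ∀ i, ∑ j ∈ range (K + 1), (if i + j = t then
      min (Z (i + j + 1)) (prefixSum x (i + 1)) - max (Z (i + j)) (prefixSum x i) else 0) =
      min (prefixSum x (i + 1)) (Z (t + 1)) - max (prefixSum x i) (Z t) := by
    intro i
    rcases lt_or_ge t i with hti | hit
    · have := (hle (t + 1)).trans (prefixSum_mono x hti)
      rw [sum_eq_zero fun j _ => if_neg (by omega)]
      omega
    rcases lt_or_ge (i + K) t with hti | hti
    · have := (prefixSum_mono x (by omega : i + 1 ≤ t - K)).trans (hge (t - K))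
      rw [Nat.sub_add_cancel (by omega : K ≤ t)] at this
      rw [sum_eq_zero fun j hj => if_neg (by have := mem_range.1 hj; omega)]
      omega
    rw [sum_eq_single_of_mem (t - i) (mem_range.2 (by omega)) fun j _ hj => if_neg (by omega),
      if_pos (by omega), Nat.add_sub_cancel' hit]
    omega
  simp_rw [hi]
  rw [sum_range_min_sub_max (prefixSum_mono x)]
  have := (hle (t + 1)).trans (prefixSum_le_prefixSum_length x (t + 1))
  simp only [prefixSum_zero, Nat.zero_max]
  omega

theorem produces_ofPrefixSums (hle : ∀ t, Z t ≤ prefixSum x t)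
    (hge : ∀ t, prefixSum x t ≤ Z (t + K)) (hZ : Monotone Z) :
    Produces K x (ofPrefixSums Z (x.length + K)) :=
  ⟨length_ofPrefixSums _ _, _, fun i _ => sum_overlap_delays hle hge hZ i, fun t ht =>
    (getD_ofPrefixSums ht).trans (sum_overlap_arrivals hle hge t).symm⟩

end Construction

section ZeroError

variable {K : ℕ} {x y : List ℕ}

theorem exists_common_output (hlen : x.length = y.length) (hxy : CatchesUp K x y)
    (hyx : CatchesUp K y x) : ∃ z, Produces K x z ∧ Produces K y z := by
  let Z t := min (prefixSum x t) (prefixSum y t)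
  have hZ : Monotone Z := fun a b h => min_le_min (prefixSum_mono x h) (prefixSum_mono y h)
  refine ⟨ofPrefixSums Z (x.length + K), ?_, ?_⟩
  · exact produces_ofPrefixSums (fun t => min_le_left _ _)
      (fun t => le_min (prefixSum_mono x (Nat.le_add_right t K)) (hxy t)) hZ
  · exact hlen ▸ produces_ofPrefixSums (fun t => min_le_right _ _)
      (fun t => le_min (hyx t) (prefixSum_mono y (Nat.le_add_right t K))) hZ

lemma separated_of_isZeroError {N n : ℕ} {C : Finset (List ℕ)} (hC : IsZeroError N K n C)
    (hx : x ∈ C) (hy : y ∈ C) (hxy : x ≠ y) : Separated K x y := by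
  by_contra h
  rw [Separated, not_or, not_not, not_not] at h
  obtain ⟨z, hz⟩ := exists_common_output (by rw [(hC.1 x hx).1, (hC.1 y hy).1]) h.1 h.2
  exact hC.2 [x] [y] rfl le_rfl (by simpa) (by simpa) (by simpa) z (by simpa using hz)

lemma CatchesUp.of_append_left {w A B : List ℕ} (h : CatchesUp K (w ++ A) (w ++ B)) :
    CatchesUp K A B := by
  intro s
  have := h (w.length + s)
  rw [add_assoc, prefixSum_append_length_add, prefixSum_append_length_add] at this
  omega

/-- A separation of `x` from `y` shows up before `x` falls silent, hence within `x ++ A`. -/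
lemma CatchesUp.of_append_of_suffix {A B : List ℕ} (hx : List.replicate K 0 <:+ x)
    (hlen : x.length = y.length) (h : CatchesUp K (x ++ A) (y ++ B)) : CatchesUp K x y := by
  intro s
  rw [← prefixSum_min_of_suffix hx s]
  obtain ⟨s', hs'⟩ : ∃ s', s' = min s (x.length - K) := ⟨_, rfl⟩
  rw [← hs']
  rcases Nat.eq_zero_or_pos s' with h0 | hpos
  · rw [h0, prefixSum_zero]
    exact Nat.zero_le _
  calc prefixSum x s' = prefixSum (x ++ A) s' := (prefixSum_append_of_le A (by omega)).symm
    _ ≤ prefixSum (y ++ B) (s' + K) := h s'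
    _ = prefixSum y (s' + K) := prefixSum_append_of_le B (by omega)
    _ ≤ prefixSum y (s + K) := prefixSum_mono y (by omega)

lemma Separated.append_left (w : List ℕ) (h : Separated K x y) :
    Separated K (w ++ x) (w ++ y) :=
  h.imp (mt CatchesUp.of_append_left) (mt CatchesUp.of_append_left)

lemma Separated.append_of_suffix {A B : List ℕ} (hx : List.replicate K 0 <:+ x)
    (hy : List.replicate K 0 <:+ y) (hlen : x.length = y.length) (h : Separated K x y) :
    Separated K (x ++ A) (y ++ B) :=
  h.imp (mt (·.of_append_of_suffix hx hlen)) (mt (·.of_append_of_suffix hy hlen.symm))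

lemma separated_flatten {n : ℕ} {D : Set (List ℕ)}
    (hD : ∀ w ∈ D, w.length = n ∧ List.replicate K 0 <:+ w)
    (hsep : ∀ x ∈ D, ∀ y ∈ D, x ≠ y → Separated K x y) :
    ∀ {L₁ L₂ : List (List ℕ)}, L₁.length = L₂.length → (∀ w ∈ L₁, w ∈ D) →
      (∀ w ∈ L₂, w ∈ D) → L₁.flatten ≠ L₂.flatten → Separated K L₁.flatten L₂.flatten
  | [], [], _, _, _, hne => absurd rfl hne
  | x :: L₁, y :: L₂, hlen, h₁, h₂, hne => by
    have hx := h₁ x List.mem_cons_self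
    have hy := h₂ y List.mem_cons_self
    rw [List.flatten_cons, List.flatten_cons]
    by_cases hxy : x = y
    · subst hxy
      exact (separated_flatten hD hsep (by simpa using hlen)
        (fun w hw => h₁ w (List.mem_cons_of_mem x hw))
        (fun w hw => h₂ w (List.mem_cons_of_mem x hw))
        (by simpa using hne)).append_left x
    · exact (hsep x hx y hy hxy).append_of_suffix (hD x hx).2 (hD y hy).2
        ((hD x hx).1.trans (hD y hy).1.symm)

lemma isZeroError_of_separated {N n : ℕ} {D : Finset (List ℕ)} (hK : K ≤ n)
    (hcode : IsCode N n D) (hpad : IsZeroPadded K n D)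
    (hsep : ∀ x ∈ D, ∀ y ∈ D, x ≠ y → Separated K x y) : IsZeroError N K n D := by
  have hD : ∀ w ∈ D, w.length = n ∧ List.replicate K 0 <:+ w := fun w hw =>
    ⟨(hcode w hw).1, min_eq_right hK ▸ hpad w hw⟩
  exact ⟨hcode, fun L₁ L₂ hlen _ h₁ h₂ hne z =>
    (separated_flatten (D := D) hD hsep hlen h₁ h₂ hne).not_produces z⟩

end ZeroError

/-- The prefix sums of the canonical form: up to the level reached after `K + 1` slots,
particles are sent as early as the alphabet `{0, …, N}` allows. -/
def canonicalPrefixSum (N K : ℕ) (x : List ℕ) (t : ℕ) : ℕ :=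
  max (prefixSum x t) (min (N * t) (prefixSum x (K + 1)))

def canonicalize (N K n : ℕ) (x : List ℕ) : List ℕ :=
  ofPrefixSums (canonicalPrefixSum N K x) n

section Canonical

variable {N K n : ℕ} {x y : List ℕ}

lemma canonicalPrefixSum_mono : Monotone (canonicalPrefixSum N K x) := fun _ _ h =>
  max_le_max (prefixSum_mono x h) (min_le_min_right _ (Nat.mul_le_mul_left N h))

lemma canonicalPrefixSum_zero : canonicalPrefixSum N K x 0 = 0 := by
  simp [canonicalPrefixSum]

lemma prefixSum_canonicalize (t : ℕ) :
    prefixSum (canonicalize N K n x) t = canonicalPrefixSum N K x (min t n) := by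
  rw [canonicalize, prefixSum_ofPrefixSums canonicalPrefixSum_mono, canonicalPrefixSum_zero,
    Nat.sub_zero]

/-- Canonicalizing raises the prefix sums of `x`, but leaves those of `y` unchanged from slot
`K + 1` on, which is where `y` has to catch up with `x`. -/
lemma CatchesUp.of_canonicalize (hx : x.length = n)
    (h : CatchesUp K (canonicalize N K n x) (canonicalize N K n y)) : CatchesUp K x y := by
  intro s
  rcases Nat.eq_zero_or_pos s with rfl | hs
  · rw [prefixSum_zero]
    exact Nat.zero_le _
  have hx' : prefixSum x s ≤ prefixSum (canonicalize N K n x) s := by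
    rw [prefixSum_canonicalize, ← prefixSum_min_length, hx]
    exact le_max_left _ _
  have hy' : prefixSum (canonicalize N K n y) (s + K) ≤ prefixSum y (s + K) := by
    rw [prefixSum_canonicalize]
    exact max_le (prefixSum_mono y (min_le_left _ _))
      ((min_le_right _ _).trans (prefixSum_mono y (by omega)))
  exact hx'.trans ((h s).trans hy')

lemma Separated.canonicalize (hx : x.length = n) (hy : y.length = n)
    (h : Separated K x y) : Separated K (canonicalize N K n x) (canonicalize N K n y) :=
  h.imp (mt (·.of_canonicalize hx)) (mt (·.of_canonicalize hy))

lemma le_of_mem_canonicalize (hx : ∀ a ∈ x, a ≤ N) : ∀ a ∈ canonicalize N K n x, a ≤ N := by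
  intro a ha
  obtain ⟨t, -, rfl⟩ := List.mem_map.1 ha
  have := prefixSum_succ_le_add hx t
  have : N * (t + 1) = N * t + N := by ring
  simp only [canonicalPrefixSum]
  omega

lemma replicate_suffix_canonicalize (hK : K ≤ n) (hx : x.length = n)
    (hpad : List.replicate K 0 <:+ x) : List.replicate K 0 <:+ canonicalize N K n x := by
  obtain ⟨m, rfl⟩ : ∃ m, n = m + K := ⟨n - K, by omega⟩
  have hm : x.length - K = m := by omega
  have hP := prefixSum_min_of_suffix hpad
  rw [hm] at hP
  have hconst : ∀ t, canonicalPrefixSum N K x (m + t) = prefixSum x m := fun t => by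
    have := prefixSum_mono x (min_le_right (K + 1) m)
    rw [canonicalPrefixSum, ← hP, ← hP (K + 1), min_eq_right (Nat.le_add_right m t)]
    omega
  rw [canonicalize, ofPrefixSums_add_of_const fun t _ => (hconst t).trans (hconst 0).symm]
  exact List.suffix_append _ _

lemma canonicalize_eq_cons_or_eq_append (hK : K < n) (hx : ∀ a ∈ x, a ≤ N) :
    (∃ v : List ℕ, canonicalize N K n x = N :: v) ∨
      ∃ i < N, ∃ v : List ℕ, canonicalize N K n x = (i :: List.replicate K 0) ++ v := by
  obtain ⟨m, rfl⟩ : ∃ m, n = 1 + K + m := ⟨n - (K + 1), by omega⟩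
  have hP1 : prefixSum x 1 ≤ N := by simpa using prefixSum_succ_le_add hx 0
  rcases le_or_gt N (prefixSum x (K + 1)) with hNS | hSN
  · have hG1 : canonicalPrefixSum N K x 1 = N := by simp only [canonicalPrefixSum]; omega
    left
    rw [canonicalize, add_assoc, ofPrefixSums_add, ofPrefixSums_one, hG1, canonicalPrefixSum_zero]
    exact ⟨_, rfl⟩
  · have hconst : ∀ t ≤ K, canonicalPrefixSum N K x (1 + t) = prefixSum x (K + 1) := by
      intro t ht
      have := prefixSum_mono x (by omega : 1 + t ≤ K + 1)
      have := Nat.mul_le_mul_left N (Nat.le_add_right 1 t)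
      simp only [canonicalPrefixSum]
      omega
    right
    refine ⟨_, hSN, ?_⟩
    rw [canonicalize, ofPrefixSums_add, ofPrefixSums_add_of_const fun t ht =>
      (hconst t ht).trans (hconst 0 (Nat.zero_le K)).symm, ofPrefixSums_one,
      canonicalPrefixSum_zero, hconst 0 (Nat.zero_le K)]
    exact ⟨_, rfl⟩

end Canonical

end DTPC

open DTPC in
theorem exists_zero_error_code_of_canonical_form_general (N K n : ℕ) (hn : K < n)
    (C : Finset (List ℕ)) (hpad : IsZeroPadded K n C) (hze : IsZeroError N K n C) :
    ∃ D : Finset (List ℕ), IsZeroPadded K n D ∧ IsZeroError N K n D ∧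
      D.card = C.card ∧
      ∀ x ∈ D, (∃ v : List ℕ, x = N :: v) ∨
        ∃ i < N, ∃ v : List ℕ, x = (i :: List.replicate K 0) ++ v := by
  classical
  have hlen : ∀ x ∈ C, x.length = n := fun x hx => (hze.1 x hx).1
  have hsep : ∀ x ∈ C, ∀ y ∈ C, x ≠ y →
      Separated K (canonicalize N K n x) (canonicalize N K n y) := fun x hx y hy hxy =>
    (separated_of_isZeroError hze hx hy hxy).canonicalize (hlen x hx) (hlen y hy)
  have hpad' : IsZeroPadded K n (C.image (canonicalize N K n)) := by
    simp only [IsZeroPadded, Finset.forall_mem_image, min_eq_right hn.le]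
    exact fun x hx =>
      replicate_suffix_canonicalize hn.le (hlen x hx) (min_eq_right hn.le ▸ hpad x hx)
  refine ⟨C.image (canonicalize N K n), hpad', ?_, ?_, ?_⟩
  · refine isZeroError_of_separated hn.le ?_ hpad' ?_
    · simp only [IsCode, Finset.forall_mem_image]
      exact fun x hx => ⟨length_ofPrefixSums _ _, le_of_mem_canonicalize (hze.1 x hx).2⟩
    · simp only [Finset.forall_mem_image]
      exact fun x hx y hy hxy => hsep x hx y hy (ne_of_apply_ne _ hxy)
  · exact Finset.card_image_of_injOn fun x hx y hy hxy =>
      by_contra fun h => (hsep x hx y hy h).ne hxy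
  · simp only [Finset.forall_mem_image]
    exact fun x hx => canonicalize_eq_cons_or_eq_append hn (hze.1 x hx).2

/-- From any zero-padded zero-error code `C` of length `n > K` one can obtain a
zero-padded zero-error code `D` of the same size all of whose codewords begin either
with the symbol `N` or with a prefix `i ∘ 0^K` for some `i ∈ {0, …, N-1}`. -/
theorem exists_zero_error_code_of_canonical_form (N K n : ℕ) (hN : 1 ≤ N) (hn : K < n)
    (C : Finset (List ℕ)) (hpad : IsZeroPadded K n C) (hze : IsZeroError N K n C) :
    ∃ D : Finset (List ℕ), IsZeroPadded K n D ∧ IsZeroError N K n D ∧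
      D.card = C.card ∧
      ∀ x ∈ D, (∃ v : List ℕ, x = N :: v) ∨
        ∃ i < N, ∃ v : List ℕ, x = (i :: List.replicate K 0) ++ v :=
  exists_zero_error_code_of_canonical_form_general N K n hn C hpad hze
end

section
/- For all integers N ≥ 1 and K ≥ 0, if r denotes the unique positive real root of the polynomial x^{K+1} − x^K − N, then every complex root z of this polynomial with z ≠ r satisfies |z| < r; in particular, r is the root of largest modulus. -/
/-!
Taking norms in `z ^ K * (z - 1) = N` gives `‖z‖ ^ K * ‖z - 1‖ = N = r ^ K * (r - 1)`. Since
`‖z - 1‖ ≥ ‖z‖ - 1` and `t ↦ t ^ K * (t - 1)` is strictly increasing for `t ≥ 1`, this forces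
`‖z‖ ≤ r`, and `‖z‖ = r` forces equality in the triangle inequality `‖z‖ ≤ ‖z - 1‖ + 1`, which
makes `z` a positive real, namely `r`.
-/

theorem Complex.eq_norm_of_norm_sub_one_add_one {z : ℂ} (h : ‖z - 1‖ + 1 = ‖z‖) :
    z = ‖z‖ := by
  have hsame : ‖(z - 1) + 1‖ = ‖z - 1‖ + ‖(1 : ℂ)‖ := by simpa using h.symm
  have hreal : z - 1 = ‖z - 1‖ := by
    simpa [Complex.real_smul] using norm_add_eq_iff_real.mp hsame
  rw [← h]
  push_cast
  linear_combination hreal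

section

variable {K N : ℕ} {r : ℝ} {z : ℂ}

theorem one_le_of_pow_succ_sub_pow_eq_natCast (hr : 0 < r) (hroot : r ^ (K + 1) - r ^ K = N) :
    1 ≤ r := by
  have hfac : r ^ K * (r - 1) = N := by linear_combination hroot
  have hnonneg : 0 ≤ r ^ K * (r - 1) := hfac ▸ N.cast_nonneg
  linarith [(mul_nonneg_iff_of_pos_left (pow_pos hr K)).mp hnonneg]

theorem norm_pow_mul_norm_sub_one_eq_natCast (hz : z ^ (K + 1) - z ^ K = N) :
    ‖z‖ ^ K * ‖z - 1‖ = N := by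
  rw [← norm_pow, ← norm_mul, show z ^ K * (z - 1) = N by linear_combination hz,
    Complex.norm_natCast]

theorem norm_le_of_pow_succ_sub_pow_eq_natCast (hr : 0 < r)
    (hroot : r ^ (K + 1) - r ^ K = N) (hz : z ^ (K + 1) - z ^ K = N) : ‖z‖ ≤ r := by
  by_contra! hlt
  have hr1 := one_le_of_pow_succ_sub_pow_eq_natCast hr hroot
  have hpow : r ^ K ≤ ‖z‖ ^ K := pow_le_pow_left₀ hr.le hlt.le K
  have hbound : ‖z‖ ^ K * (‖z‖ - 1) ≤ ‖z‖ ^ K * ‖z - 1‖ :=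
    mul_le_mul_of_nonneg_left (by simpa using norm_sub_norm_le z 1) (by positivity)
  rw [norm_pow_mul_norm_sub_one_eq_natCast hz, ← hroot, pow_succ] at hbound
  nlinarith [mul_pos (pow_pos hr K) (sub_pos.mpr hlt),
    mul_nonneg (sub_nonneg.mpr hpow) (sub_nonneg.mpr hr1)]

theorem eq_of_pow_succ_sub_pow_eq_natCast_of_norm_eq (hr : 0 < r)
    (hroot : r ^ (K + 1) - r ^ K = N) (hz : z ^ (K + 1) - z ^ K = N) (hnorm : ‖z‖ = r) :
    z = r := by
  have hsub : ‖z - 1‖ = r - 1 := by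
    have h := norm_pow_mul_norm_sub_one_eq_natCast hz
    rw [hnorm, ← hroot] at h
    exact mul_left_cancel₀ (pow_pos hr K).ne' (by linear_combination h)
  rw [Complex.eq_norm_of_norm_sub_one_add_one (z := z) (by rw [hsub, hnorm]; ring), hnorm]

end

theorem positive_root_has_largest_modulus_general (N K : ℕ) (r : ℝ) (hr : 0 < r)
    (hroot : r ^ (K + 1) - r ^ K = (N : ℝ)) :
    ∀ z : ℂ, z ^ (K + 1) - z ^ K = (N : ℂ) → z ≠ (r : ℂ) → ‖z‖ < r := by
  intro z hz hzr
  exact (norm_le_of_pow_succ_sub_pow_eq_natCast hr hroot hz).lt_of_ne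
    fun hnorm => hzr (eq_of_pow_succ_sub_pow_eq_natCast_of_norm_eq hr hroot hz hnorm)

/-- If `r` is the unique positive real root of `x^{K+1} - x^K - N` (`N ≥ 1`, `K ≥ 0`),
then every complex root `z ≠ r` of this polynomial satisfies `|z| < r`; in particular,
`r` is the root of largest modulus. -/
theorem positive_root_has_largest_modulus (N K : ℕ) (hN : 1 ≤ N) (r : ℝ) (hr : 0 < r)
    (hroot : r ^ (K + 1) - r ^ K = (N : ℝ))
    (huniq : ∀ s : ℝ, 0 < s → s ^ (K + 1) - s ^ K = (N : ℝ) → s = r) :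
    ∀ z : ℂ, z ^ (K + 1) - z ^ K = (N : ℂ) → z ≠ (r : ℂ) → ‖z‖ < r :=
  positive_root_has_largest_modulus_general N K r hr hroot
end

section
/- Let N ≥ 1, K ≥ 0 be integers and let (a_n) be the sequence defined by a_n = 1 for 0 ≤ n ≤ K and a_n = a_{n−1} + N·a_{n−K−1} for n > K. Then lim_{n→∞} (1/n)·log₂ a_n = log₂ r, where r is the unique positive real root of the polynomial x^{K+1} − x^K − N. -/
/-!
Both `a n` and `r ^ n` satisfy the linear recurrence `u n = u (n - 1) + N * u (n - K - 1)`,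
whose nonnegative coefficients make it order preserving. Comparing initial values gives
`r ^ n ≤ r ^ K * a n` and `a n ≤ r ^ n`, so `a n = Θ(r ^ n)` and `log (a n) / n → log r`.
-/

open Filter Topology

theorem one_le_of_pow_succ_sub_pow_nonneg {r : ℝ} {K : ℕ} (hr : 0 < r)
    (h : 0 ≤ r ^ (K + 1) - r ^ K) : 1 ≤ r := by
  rw [pow_succ, ← mul_sub_one] at h
  linarith [nonneg_of_mul_nonneg_right h (pow_pos hr K)]

section DelayRecurrence

variable {K : ℕ} {c : ℝ}

theorem le_of_delay_recurrence (hc : 0 ≤ c) {u v : ℕ → ℝ}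
    (hu : ∀ n, K < n → u n = u (n - 1) + c * u (n - K - 1))
    (hv : ∀ n, K < n → v n = v (n - 1) + c * v (n - K - 1))
    (hinit : ∀ n ≤ K, u n ≤ v n) (n : ℕ) : u n ≤ v n := by
  induction n using Nat.strong_induction_on with
  | _ n ih =>
    rcases le_or_gt n K with hnK | hnK
    · exact hinit n hnK
    · rw [hu n hnK, hv n hnK]
      gcongr
      · exact ih _ (by omega)
      · exact ih _ (by omega)

theorem pow_delay_recurrence {r : ℝ} (hroot : r ^ (K + 1) - r ^ K = c) :
    ∀ n, K < n → r ^ n = r ^ (n - 1) + c * r ^ (n - K - 1) := by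
  intro n hn
  obtain ⟨m, rfl⟩ : ∃ m, n = m + K + 1 := ⟨n - K - 1, by omega⟩
  rw [show m + K + 1 - 1 = m + K by omega, show m + K + 1 - K - 1 = m by omega, ← hroot]
  ring

end DelayRecurrence

theorem tendsto_log_div_of_pow_bounds {x : ℕ → ℝ} {r c C : ℝ} (hr : 0 < r) (hc : 0 < c)
    (hlow : ∀ n, c * r ^ n ≤ x n) (hup : ∀ n, x n ≤ C * r ^ n) :
    Tendsto (fun n : ℕ => Real.log (x n) / n) atTop (𝓝 (Real.log r)) := by
  have hC : 0 < C := by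
    simpa using (mul_pos hc (pow_pos hr 0)).trans_le ((hlow 0).trans (hup 0))
  have hlim : ∀ d : ℝ, Tendsto (fun n : ℕ => Real.log r + Real.log d / n) atTop
      (𝓝 (Real.log r)) := fun d => by
    simpa using tendsto_const_nhds.add (tendsto_const_div_atTop_nhds_zero_nat (Real.log d))
  have hlog : ∀ d : ℝ, 0 < d → ∀ n : ℕ,
      Real.log (d * r ^ n) = n * Real.log r + Real.log d := fun d hd n => by
    rw [Real.log_mul hd.ne' (pow_pos hr n).ne', Real.log_pow]
    ring
  refine tendsto_of_tendsto_of_tendsto_of_le_of_le' (hlim c) (hlim C) ?_ ?_ <;>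
    filter_upwards [eventually_gt_atTop 0] with n hn <;>
    have hn' : (0 : ℝ) < n := by exact_mod_cast hn
  · rw [le_div_iff₀ hn', add_mul, div_mul_cancel₀ _ hn'.ne', mul_comm, ← hlog c hc]
    exact Real.log_le_log (by positivity) (hlow n)
  · rw [div_le_iff₀ hn', add_mul, div_mul_cancel₀ _ hn'.ne', mul_comm, ← hlog C hC]
    exact Real.log_le_log (by linarith [hlow n, mul_pos hc (pow_pos hr n)]) (hup n)

theorem tendsto_log_recurrence_sequence_general (N K : ℕ) (a : ℕ → ℕ)
    (ha0 : ∀ n ≤ K, a n = 1)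
    (harec : ∀ n, K < n → a n = a (n - 1) + N * a (n - K - 1))
    (r : ℝ) (hr : 0 < r) (hroot : r ^ (K + 1) - r ^ K = (N : ℝ)) :
    Filter.Tendsto (fun n : ℕ => (1 / n : ℝ) * Real.logb 2 (a n)) Filter.atTop
      (nhds (Real.logb 2 r)) := by
  have hr1 : 1 ≤ r := one_le_of_pow_succ_sub_pow_nonneg hr (hroot ▸ N.cast_nonneg)
  have hN : (0 : ℝ) ≤ N := N.cast_nonneg
  have hpow := pow_delay_recurrence hroot
  have hrec : ∀ n, K < n → (a n : ℝ) = a (n - 1) + N * a (n - K - 1) := fun n hn => by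
    exact_mod_cast harec n hn
  have hupper : ∀ n, (a n : ℝ) ≤ 1 * r ^ n := by
    simpa using le_of_delay_recurrence hN hrec hpow fun n hn => by
      simpa [ha0 n hn] using one_le_pow₀ hr1
  have hlower : ∀ n, (r ^ K)⁻¹ * r ^ n ≤ a n := fun n => by
    rw [inv_mul_le_iff₀ (pow_pos hr K)]
    refine le_of_delay_recurrence (v := fun n => r ^ K * a n) hN hpow
      (fun n hn => by rw [hrec n hn]; ring) (fun n hn => ?_) n
    simpa [ha0 n hn] using pow_le_pow_right₀ hr1 hn
  have hlim := (tendsto_log_div_of_pow_bounds hr (by positivity) hlower hupper).div_const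
    (Real.log 2)
  refine hlim.congr fun n => ?_
  simp only [Real.logb]
  ring

/-- Let `a` satisfy `a n = 1` for `0 ≤ n ≤ K` and `a n = a (n-1) + N · a (n-K-1)` for
`n > K` (with `N ≥ 1`). Then `(1/n) · log₂ (a n) → log₂ r`, where `r` is the unique
positive real root of `x^{K+1} - x^K - N`. -/
theorem tendsto_log_recurrence_sequence (N K : ℕ) (hN : 1 ≤ N) (a : ℕ → ℕ)
    (ha0 : ∀ n ≤ K, a n = 1)
    (harec : ∀ n, K < n → a n = a (n - 1) + N * a (n - K - 1))
    (r : ℝ) (hr : 0 < r) (hroot : r ^ (K + 1) - r ^ K = (N : ℝ))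
    (huniq : ∀ s : ℝ, 0 < s → s ^ (K + 1) - s ^ K = (N : ℝ) → s = r) :
    Filter.Tendsto (fun n : ℕ => (1 / n : ℝ) * Real.logb 2 (a n)) Filter.atTop
      (nhds (Real.logb 2 r)) :=
  tendsto_log_recurrence_sequence_general N K a ha0 harec r hr hroot
end

section
/- Fix a real number K ≥ 0. For every real N > 0 there is a unique real number r(N) > 1 satisfying r(N)^{K+1} − r(N)^K = N, and both the function N ↦ r(N) and the function N ↦ log₂ r(N) are strictly increasing and concave on (0, ∞). -/
/-!
Write `f x = x ^ (K + 1) - x ^ K = x ^ K (x - 1)`. On `[1, ∞)` the function `f` is continuous,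
strictly increasing, convex, vanishes at `1` and is unbounded, so `r` is its inverse on `(0, ∞)`.
The inverse of an increasing convex function is increasing and concave, and composing with the
increasing concave `logb 2` preserves both properties.
-/

open Set Real

section

variable {𝕜 E β : Type*} {s : Set E} {t : Set β} {f : E → β} {r : β → E}

theorem StrictMonoOn.of_rightInvOn [LinearOrder E] [Preorder β] (hf : StrictMonoOn f s)
    (hr : MapsTo r t s) (hfr : RightInvOn r f t) : StrictMonoOn r t := fun x hx y hy hxy =>
  (hf.lt_iff_lt (hr hx) (hr hy)).1 (by rwa [hfr hx, hfr hy])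

theorem ConvexOn.concaveOn_of_rightInvOn [Semiring 𝕜] [PartialOrder 𝕜]
    [AddCommMonoid E] [LinearOrder E] [SMul 𝕜 E] [AddCommMonoid β] [PartialOrder β] [SMul 𝕜 β]
    (hf : ConvexOn 𝕜 s f) (hf' : StrictMonoOn f s) (ht : Convex 𝕜 t) (hr : MapsTo r t s)
    (hfr : RightInvOn r f t) : ConcaveOn 𝕜 t r := by
  refine ⟨ht, fun x hx y hy a b ha hb hab => ?_⟩
  refine (hf'.le_iff_le (hf.1 (hr hx) (hr hy) ha hb hab) (hr (ht hx hy ha hb hab))).1 ?_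
  calc f (a • r x + b • r y) ≤ a • f (r x) + b • f (r y) := hf.2 (hr hx) (hr hy) ha hb hab
    _ = f (r (a • x + b • y)) := by rw [hfr hx, hfr hy, hfr (ht hx hy ha hb hab)]

theorem ConcaveOn.comp_of_mapsTo {γ : Type*} [Semiring 𝕜] [PartialOrder 𝕜] [AddCommMonoid E]
    [SMul 𝕜 E] [AddCommMonoid β] [PartialOrder β] [SMul 𝕜 β] [AddCommMonoid γ] [PartialOrder γ]
    [SMul 𝕜 γ] {g : β → γ} (hg : ConcaveOn 𝕜 t g) (hf : ConcaveOn 𝕜 s f) (hg' : MonotoneOn g t)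
    (hfs : MapsTo f s t) : ConcaveOn 𝕜 s (g ∘ f) :=
  ⟨hf.1, fun _ hx _ hy _ _ ha hb hab => (hg.2 (hfs hx) (hfs hy) ha hb hab).trans <|
    hg' (hg.1 (hfs hx) (hfs hy) ha hb hab) (hfs (hf.1 hx hy ha hb hab)) (hf.2 hx hy ha hb hab)⟩

end

namespace Real

theorem concaveOn_logb {b : ℝ} (hb : 1 ≤ b) : ConcaveOn ℝ (Ioi 0) (logb b) := by
  have h : logb b = (log b)⁻¹ • log := by ext x; simp [logb, div_eq_inv_mul]
  rw [h]
  exact strictConcaveOn_log_Ioi.concaveOn.smul (inv_nonneg.2 (log_nonneg hb))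

variable {K : ℝ}

theorem rpow_add_one_sub_rpow {x : ℝ} (hx : x ≠ 0) (K : ℝ) :
    x ^ (K + 1) - x ^ K = x ^ K * (x - 1) := by
  rw [rpow_add_one hx]; ring

theorem strictMonoOn_rpow_add_one_sub_rpow (hK : 0 ≤ K) :
    StrictMonoOn (fun x : ℝ => x ^ (K + 1) - x ^ K) (Ici 1) := by
  intro x (hx : 1 ≤ x) y (hy : 1 ≤ y) hxy
  simp only [rpow_add_one_sub_rpow (by positivity : x ≠ 0),
    rpow_add_one_sub_rpow (by positivity : y ≠ 0)]
  have hxy_pow : x ^ K ≤ y ^ K := rpow_le_rpow (by positivity) hxy.le hK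
  have hx_pow : 1 ≤ x ^ K := one_le_rpow hx hK
  nlinarith

/-- For `K ≤ 1` this is the sum of the convex `x ^ (K + 1)` and `-x ^ K`; for `K ≥ 1` it is the
product of the nonnegative, increasing, convex functions `x ^ K` and `x - 1`. -/
theorem convexOn_rpow_add_one_sub_rpow (hK : 0 ≤ K) :
    ConvexOn ℝ (Ici 1) (fun x : ℝ => x ^ (K + 1) - x ^ K) := by
  have hsub : Ici (1 : ℝ) ⊆ Ici 0 := Ici_subset_Ici.2 zero_le_one
  rcases le_total K 1 with hK1 | hK1
  · exact ((convexOn_rpow (by linarith)).sub (concaveOn_rpow hK hK1)).subset hsub (convex_Ici 1)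
  · have hpow : ConvexOn ℝ (Ici 1) (fun x : ℝ => x ^ K) :=
      (convexOn_rpow hK1).subset hsub (convex_Ici 1)
    have hlin : ConvexOn ℝ (Ici 1) (fun x : ℝ => x - 1) :=
      (convexOn_id (convex_Ici 1)).sub (concaveOn_const 1 (convex_Ici 1))
    have hmon : MonovaryOn (fun x : ℝ => x ^ K) (fun x => x - 1) (Ici 1) :=
      fun x (hx : 1 ≤ x) y _ hxy =>
        rpow_le_rpow (by positivity) (sub_lt_sub_iff_right 1 |>.1 hxy).le hK
    refine (hpow.mul hlin (fun x (hx : 1 ≤ x) => by positivity)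
      (fun x (hx : 1 ≤ x) => sub_nonneg.2 hx) hmon).congr fun x (hx : 1 ≤ x) => ?_
    exact (rpow_add_one_sub_rpow (by positivity) K).symm

theorem surjOn_rpow_add_one_sub_rpow (hK : 0 ≤ K) :
    SurjOn (fun x : ℝ => x ^ (K + 1) - x ^ K) (Ioi 1) (Ioi 0) := by
  intro N (hN : 0 < N)
  have hcont : Continuous (fun x : ℝ => x ^ (K + 1) - x ^ K) :=
    (continuous_rpow_const (by linarith)).sub (continuous_rpow_const hK)
  have hlarge : N ≤ (N + 1) ^ (K + 1) - (N + 1) ^ K := by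
    rw [rpow_add_one_sub_rpow (by positivity)]
    nlinarith [one_le_rpow (by linarith : 1 ≤ N + 1) hK]
  obtain ⟨x, ⟨hx, -⟩, hxN⟩ := intermediate_value_Ioc (by linarith : (1 : ℝ) ≤ N + 1)
    hcont.continuousOn ⟨by simpa using hN, hlarge⟩
  exact ⟨x, hx, hxN⟩

end Real

/-- Fix a real `K ≥ 0`. For every real `N > 0` there is a unique `r N > 1` with
`(r N)^{K+1} - (r N)^K = N` (real powers), and both `N ↦ r N` and `N ↦ log₂ (r N)` are
strictly increasing and concave on `(0, ∞)`. -/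
theorem root_mono_concave_in_N (K : ℝ) (hK : 0 ≤ K) :
    ∃ r : ℝ → ℝ,
      (∀ N : ℝ, 0 < N → (1 < r N ∧ r N ^ (K + 1) - r N ^ K = N ∧
        ∀ s : ℝ, 1 < s → s ^ (K + 1) - s ^ K = N → s = r N)) ∧
      StrictMonoOn r (Set.Ioi 0) ∧ ConcaveOn ℝ (Set.Ioi 0) r ∧
      StrictMonoOn (fun N => Real.logb 2 (r N)) (Set.Ioi 0) ∧
      ConcaveOn ℝ (Set.Ioi 0) (fun N => Real.logb 2 (r N)) := by
  set f : ℝ → ℝ := fun x => x ^ (K + 1) - x ^ K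
  have hsurj := surjOn_rpow_add_one_sub_rpow hK
  set r := Function.invFunOn f (Ioi 1)
  have hmaps : MapsTo r (Ioi 0) (Ioi 1) := hsurj.mapsTo_invFunOn
  have hinv : RightInvOn r f (Ioi 0) := hsurj.rightInvOn_invFunOn
  have hmaps' : MapsTo r (Ioi 0) (Ici 1) := hmaps.mono_right Ioi_subset_Ici_self
  have hfmono := strictMonoOn_rpow_add_one_sub_rpow hK
  have hrmono : StrictMonoOn r (Ioi 0) := hfmono.of_rightInvOn hmaps' hinv
  have hrconc : ConcaveOn ℝ (Ioi 0) r :=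
    (convexOn_rpow_add_one_sub_rpow hK).concaveOn_of_rightInvOn hfmono (convex_Ioi 0) hmaps' hinv
  have hpos : MapsTo r (Ioi 0) (Ioi 0) := hmaps.mono_right (Ioi_subset_Ioi zero_le_one)
  refine ⟨r, fun N hN => ⟨hmaps hN, hinv hN, fun s hs hsN => ?_⟩, hrmono, hrconc,
    (strictMonoOn_logb one_lt_two).comp hrmono hpos, ?_⟩
  · exact hfmono.injOn (le_of_lt hs) (hmaps' hN) (hsN.trans (hinv hN).symm)
  · exact (concaveOn_logb one_le_two).comp_of_mapsTo hrconc
      (strictMonoOn_logb one_lt_two).monotoneOn hpos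
end

section
/- Fix a real number N > 0. For every real K ≥ 0 there is a unique real number r(K) > 1 satisfying r(K)^{K+1} − r(K)^K = N, and both the function K ↦ r(K) and the function K ↦ log₂ r(K) are strictly decreasing and convex on [0, ∞). -/
/-!
Write `u = log r`. The equation becomes `K u + ψ u = log N` with `ψ u = log (exp u - 1)`, which
is strictly increasing and concave on `(0, ∞)` (it is `u + log (1 - exp (-u))`); this gives
uniqueness and, since `K u` grows with `K`, that the root decreases in `K`. For
convexity, average the equations at `K₁` and `K₂`: concavity of `ψ` and the two-point Chebyshev
inequality `a K₁ u₁ + b K₂ u₂ ≤ (a K₁ + b K₂) (a u₁ + b u₂)` (valid because `u` is decreasing)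
show that the left side at `K = a K₁ + b K₂`, `u = a u₁ + b u₂` is at least `log N`, so
`u K ≤ a u₁ + b u₂`. Finally `r = exp ∘ u` and `log₂ r = u / log 2` inherit convexity.
-/

open Real Set

theorem ConvexOn.exp {E : Type*} [AddCommMonoid E] [SMul ℝ E] {s : Set E} {f : E → ℝ}
    (hf : ConvexOn ℝ s f) : ConvexOn ℝ s fun x => exp (f x) :=
  ⟨hf.1, fun _ hx _ hy _ _ ha hb hab =>
    (exp_le_exp.2 (hf.2 hx hy ha hb hab)).trans (convexOn_exp.2 trivial trivial ha hb hab)⟩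

theorem ConcaveOn.log {E : Type*} [AddCommMonoid E] [SMul ℝ E] {s : Set E} {f : E → ℝ}
    (hf : ConcaveOn ℝ s f) (hpos : ∀ x ∈ s, 0 < f x) : ConcaveOn ℝ s fun x => log (f x) :=
  ⟨hf.1, fun _ hx _ hy _ _ ha hb hab =>
    (strictConcaveOn_log_Ioi.concaveOn.2 (hpos _ hx) (hpos _ hy) ha hb hab).trans
      (log_le_log (convex_Ioi (0 : ℝ) (hpos _ hx) (hpos _ hy) ha hb hab) (hf.2 hx hy ha hb hab))⟩

theorem concaveOn_log_exp_sub_one : ConcaveOn ℝ (Ioi 0) fun u => log (exp u - 1) := by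
  have hconv : ConvexOn ℝ (Ioi 0) fun u : ℝ => exp (-u) :=
    (concaveOn_id (convex_Ioi 0)).neg.exp
  have hfactor : ConcaveOn ℝ (Ioi 0) fun u : ℝ => log (1 - exp (-u)) :=
    ((concaveOn_const 1 (convex_Ioi 0)).sub hconv).log fun u hu => by
      simpa using exp_lt_one_iff.2 (neg_lt_zero.2 hu)
  refine ((concaveOn_id (convex_Ioi 0)).add hfactor).congr fun u hu => ?_
  have h : exp u - 1 = exp u * (1 - exp (-u)) := by rw [mul_sub, ← exp_add]; simp
  simp only [Pi.add_apply, id, h,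
    log_mul (exp_pos u).ne' (sub_pos.2 (exp_lt_one_iff.2 (neg_lt_zero.2 hu))).ne', log_exp]

theorem strictMonoOn_log_exp_sub_one : StrictMonoOn (fun u => log (exp u - 1)) (Ioi 0) :=
  fun _ hu _ hv huv => strictMonoOn_log (by simpa using hu) (by simpa using hv)
    (by simpa using huv)

theorem strictMonoOn_mul_add_log_exp_sub_one {K : ℝ} (hK : 0 ≤ K) :
    StrictMonoOn (fun u => K * u + log (exp u - 1)) (Ioi 0) :=
  fun _ hu _ hv huv => add_lt_add_of_le_of_lt (mul_le_mul_of_nonneg_left huv.le hK)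
    (strictMonoOn_log_exp_sub_one hu hv huv)

theorem exp_rpow_add_one_sub_exp_rpow {u : ℝ} (hu : 0 < u) (K : ℝ) :
    exp u ^ (K + 1) - exp u ^ K = exp (K * u + log (exp u - 1)) := by
  rw [rpow_add_one (exp_pos u).ne', exp_add, exp_log (by simpa using hu), mul_comm K, exp_mul]
  ring

theorem exists_one_lt_rpow_add_one_sub_rpow_eq {K N : ℝ} (hK : 0 ≤ K) (hN : 0 < N) :
    ∃ x, 1 < x ∧ x ^ (K + 1) - x ^ K = N := by
  have hcont : Continuous fun x : ℝ => x ^ (K + 1) - x ^ K :=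
    (continuous_id.rpow_const fun _ => Or.inr (by linarith)).sub
      (continuous_id.rpow_const fun _ => Or.inr hK)
  have hbig : N ≤ (N + 2) ^ (K + 1) - (N + 2) ^ K := by
    rw [rpow_add_one (by positivity), ← mul_sub_one]
    nlinarith [one_le_rpow (by linarith : (1 : ℝ) ≤ N + 2) hK]
  obtain ⟨x, hx, hxN⟩ := intermediate_value_Icc (a := 1) (b := N + 2) (by linarith)
    hcont.continuousOn ⟨by simpa using hN.le, hbig⟩
  refine ⟨x, hx.1.lt_of_ne fun h => ?_, hxN⟩
  simp only [← h, one_rpow, sub_self] at hxN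
  linarith

/-- `u K` plays the role of `log r(K)` and `c` that of `log N`. -/
def IsLogRoot (c : ℝ) (u : ℝ → ℝ) : Prop :=
  ∀ K, 0 ≤ K → 0 < u K ∧ K * u K + log (exp (u K) - 1) = c

theorem exists_isLogRoot {N : ℝ} (hN : 0 < N) : ∃ u, IsLogRoot (log N) u := by
  have : ∀ K, ∃ v, 0 ≤ K → 0 < v ∧ K * v + log (exp v - 1) = log N := by
    intro K
    by_cases hK : 0 ≤ K
    · obtain ⟨x, hx, hxN⟩ := exists_one_lt_rpow_add_one_sub_rpow_eq hK hN
      have hlog : 0 < log x := log_pos hx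
      refine ⟨log x, fun _ => ⟨hlog, ?_⟩⟩
      rw [← hxN, ← exp_log (zero_lt_one.trans hx), exp_rpow_add_one_sub_exp_rpow hlog, log_exp,
        log_exp]
    · exact ⟨1, fun h => absurd h hK⟩
  choose u hu using this
  exact ⟨u, hu⟩

namespace IsLogRoot

variable {c : ℝ} {u : ℝ → ℝ}

theorem strictAntiOn (hu : IsLogRoot c u) : StrictAntiOn u (Ici 0) := by
  intro K₁ hK₁ K₂ hK₂ hlt
  obtain ⟨hu₁, hc₁⟩ := hu K₁ hK₁
  obtain ⟨hu₂, hc₂⟩ := hu K₂ hK₂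
  refine ((strictMonoOn_mul_add_log_exp_sub_one hK₁).lt_iff_lt hu₂ hu₁).1 ?_
  have := mul_lt_mul_of_pos_right hlt hu₂
  linarith

theorem convexOn (hu : IsLogRoot c u) : ConvexOn ℝ (Ici 0) u := by
  refine ⟨convex_Ici 0, fun K₁ hK₁ K₂ hK₂ a b ha hb hab => ?_⟩
  simp only [smul_eq_mul]
  obtain ⟨hu₁, hc₁⟩ := hu K₁ hK₁
  obtain ⟨hu₂, hc₂⟩ := hu K₂ hK₂
  have hK : 0 ≤ a * K₁ + b * K₂ := add_nonneg (mul_nonneg ha hK₁) (mul_nonneg hb hK₂)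
  have hℓ : 0 < a * u K₁ + b * u K₂ := convex_Ioi (0 : ℝ) hu₁ hu₂ ha hb hab
  obtain ⟨hu₀, hc₀⟩ := hu _ hK
  have hanti : (K₁ - K₂) * (u K₁ - u K₂) ≤ 0 := by
    rcases le_total K₁ K₂ with h | h
    · exact mul_nonpos_of_nonpos_of_nonneg (sub_nonpos.2 h)
        (sub_nonneg.2 (hu.strictAntiOn.antitoneOn hK₁ hK₂ h))
    · exact mul_nonpos_of_nonneg_of_nonpos (sub_nonneg.2 h)
        (sub_nonpos.2 (hu.strictAntiOn.antitoneOn hK₂ hK₁ h))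
  -- Chebyshev: the defect of this bilinear term is `-a b (K₁ - K₂) (u K₁ - u K₂) ≥ 0`.
  have hcross : a * (K₁ * u K₁) + b * (K₂ * u K₂) ≤
      (a * K₁ + b * K₂) * (a * u K₁ + b * u K₂) := by
    obtain rfl : b = 1 - a := by linarith
    nlinarith [mul_nonneg (mul_nonneg ha hb) (neg_nonneg.2 hanti)]
  have hconc := concaveOn_log_exp_sub_one.2 hu₁ hu₂ ha hb hab
  simp only [smul_eq_mul] at hconc
  refine ((strictMonoOn_mul_add_log_exp_sub_one hK).le_iff_le hu₀ hℓ).1 ?_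
  rw [hc₀]
  calc c = a * (K₁ * u K₁ + log (exp (u K₁) - 1)) + b * (K₂ * u K₂ + log (exp (u K₂) - 1)) := by
        rw [hc₁, hc₂, ← add_mul, hab, one_mul]
    _ ≤ _ := by linarith

end IsLogRoot

/-- Fix a real `N > 0`. For every real `K ≥ 0` there is a unique `r K > 1` with
`(r K)^{K+1} - (r K)^K = N` (real powers), and both `K ↦ r K` and `K ↦ log₂ (r K)` are
strictly decreasing and convex on `[0, ∞)`. -/
theorem root_anti_convex_in_K (N : ℝ) (hN : 0 < N) :
    ∃ r : ℝ → ℝ,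
      (∀ K : ℝ, 0 ≤ K → (1 < r K ∧ r K ^ (K + 1) - r K ^ K = N ∧
        ∀ s : ℝ, 1 < s → s ^ (K + 1) - s ^ K = N → s = r K)) ∧
      StrictAntiOn r (Set.Ici 0) ∧ ConvexOn ℝ (Set.Ici 0) r ∧
      StrictAntiOn (fun K => Real.logb 2 (r K)) (Set.Ici 0) ∧
      ConvexOn ℝ (Set.Ici 0) (fun K => Real.logb 2 (r K)) := by
  obtain ⟨u, hu⟩ := exists_isLogRoot hN
  have hlog2 : 0 < log 2 := log_pos one_lt_two
  have hlogb : (fun K => logb 2 (exp (u K))) = fun K => (log 2)⁻¹ * u K := by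
    funext K
    rw [logb, log_exp, inv_mul_eq_div]
  refine ⟨fun K => exp (u K), fun K hK => ⟨one_lt_exp_iff.2 (hu K hK).1, ?_, fun s hs hsN => ?_⟩,
    exp_strictMono.comp_strictAntiOn hu.strictAntiOn, hu.convexOn.exp, ?_, ?_⟩
  · rw [exp_rpow_add_one_sub_exp_rpow (hu K hK).1, (hu K hK).2, exp_log hN]
  · have hlog : 0 < log s := log_pos hs
    rw [← exp_log (zero_lt_one.trans hs)]
    refine congrArg exp ((strictMonoOn_mul_add_log_exp_sub_one hK).injOn hlog (hu K hK).1 ?_)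
    rw [(hu K hK).2, ← log_exp (_ + _), ← exp_rpow_add_one_sub_exp_rpow hlog,
      exp_log (zero_lt_one.trans hs), hsN]
  · rw [hlogb]
    exact fun K₁ hK₁ K₂ hK₂ hlt => mul_lt_mul_of_pos_left (hu.strictAntiOn hK₁ hK₂ hlt)
      (inv_pos.2 hlog2)
  · rw [hlogb]
    exact hu.convexOn.smul (inv_nonneg.2 hlog2.le)
end

section
/- A zero-padded code C of length n for DTPC(N,K) is a zero-error code if and only if for every two distinct codewords x, y ∈ C there exists no z with x ⤳ z and y ⤳ z. -/
/-!
A zero-padded codeword of length `n` sends nothing in its last `min n K` slots, so all of its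
particles arrive within its own first `n` output slots. Hence an output of a concatenation `a ++ x`
splits: its first `n` slots followed by `K` zeros are an output of `a`, and the remaining slots
are an output of `x`. Peeling codewords off two colliding concatenations one at a time, the
first pair of differing codewords would collide on its own.
-/

open Finset

def received (K m : ℕ) (d : ℕ → ℕ → ℕ) (t : ℕ) : ℕ :=
  ∑ i ∈ range m, ∑ j ∈ range (K + 1), if i + j = t then d i j else 0

section received

variable {K n m t : ℕ} {d : ℕ → ℕ → ℕ}

theorem received_add_of_lt (ht : t < n) : received K (n + m) d t = received K n d t := by
  unfold received
  rw [sum_range_add, add_eq_left]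
  exact sum_eq_zero fun i _ => sum_eq_zero fun j _ => if_neg (by omega)

theorem received_add_add :
    received K (n + m) d (n + t) = received K n d (n + t) + received K m (fun i => d (n + i)) t := by
  unfold received
  rw [sum_range_add]
  exact congrArg _ <| sum_congr rfl fun i _ => sum_congr rfl fun j _ => if_congr (by omega) rfl rfl

theorem received_eq_zero_of_le (hd : ∀ i < n, n ≤ i + K → ∀ j ≤ K, d i j = 0) (ht : n ≤ t) :
    received K n d t = 0 := by
  refine sum_eq_zero fun i hi => sum_eq_zero fun j hj => ?_
  rw [mem_range] at hi hj
  split_ifs with hij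
  · exact hd i hi (by omega) j (by omega)
  · rfl

end received

theorem produces_iff_s15 {K : ℕ} {x z : List ℕ} :
    Produces K x z ↔ z.length = x.length + K ∧ ∃ d : ℕ → ℕ → ℕ,
      (∀ i < x.length, ∑ j ∈ range (K + 1), d i j = x.getD i 0) ∧
      ∀ t < x.length + K, z.getD t 0 = received K x.length d t :=
  Iff.rfl

theorem List.getD_eq_zero_of_replicate_suffix {K : ℕ} {a : List ℕ} {i : ℕ}
    (ha : replicate (min a.length K) 0 <:+ a) (hi : a.length ≤ i + K) : a.getD i 0 = 0 := by
  obtain ⟨p, hp⟩ := ha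
  have hlen : p.length + min a.length K = a.length := by simpa using congrArg List.length hp
  rw [← hp]
  rcases lt_or_ge i p.length with hip | hip
  · omega
  · rw [List.getD_append_right _ _ _ _ hip]
    simp [List.getD_eq_getElem?_getD]

theorem Produces.split_of_replicate_suffix {K : ℕ} {a x z : List ℕ}
    (ha : List.replicate (min a.length K) 0 <:+ a) (h : Produces K (a ++ x) z) :
    Produces K a (z.take a.length ++ List.replicate K 0) ∧ Produces K x (z.drop a.length) := by
  simp only [produces_iff_s15] at h ⊢
  obtain ⟨hlen, d, hsent, hrecv⟩ := h
  simp only [List.length_append] at hlen hsent hrecv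
  have hquiet : ∀ i < a.length, a.length ≤ i + K → ∀ j ≤ K, d i j = 0 := fun i hi hiK j hj => by
    have hzero := hsent i (by omega)
    rw [List.getD_append _ _ _ _ hi, List.getD_eq_zero_of_replicate_suffix ha hiK,
      sum_eq_zero_iff] at hzero
    exact hzero j (mem_range.2 (by omega))
  refine ⟨⟨by simp; omega, d, fun i hi => ?_, fun t ht => ?_⟩,
    ⟨by simp; omega, fun i => d (a.length + i), fun i hi => ?_, fun t ht => ?_⟩⟩
  · rw [hsent i (by omega), List.getD_append _ _ _ _ hi]
  · rcases lt_or_ge t a.length with hta | hta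
    · rw [← received_add_of_lt (m := x.length) hta, ← hrecv t (by omega),
        List.getD_append _ _ _ _ (by simp; omega)]
      simp [List.getD_eq_getElem?_getD, hta]
    · rw [received_eq_zero_of_le hquiet hta, List.getD_append_right _ _ _ _ (by simp; omega)]
      exact List.getD_replicate 0 (by simp; omega)
  · rw [hsent _ (by omega), List.getD_append_right _ _ _ _ (by omega), Nat.add_sub_cancel_left]
  · have hshift := hrecv (a.length + t) (by omega)
    rw [received_add_add, received_eq_zero_of_le hquiet (by omega), zero_add] at hshift
    rw [← hshift]
    simp [List.getD_eq_getElem?_getD]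

theorem IsZeroPadded.eq_of_produces_flatten {K n : ℕ} {C : Finset (List ℕ)}
    (hlen : ∀ w ∈ C, w.length = n) (hpad : IsZeroPadded K n C)
    (hpair : ∀ x ∈ C, ∀ y ∈ C, ∀ z, Produces K x z → Produces K y z → x = y) :
    ∀ {L₁ L₂ : List (List ℕ)} {z : List ℕ}, L₁.length = L₂.length →
      (∀ w ∈ L₁, w ∈ C) → (∀ w ∈ L₂, w ∈ C) →
      Produces K L₁.flatten z → Produces K L₂.flatten z → L₁ = L₂
  | [], [], _, _, _, _, _, _ => rfl
  | a :: L₁, b :: L₂, z, hL, h₁, h₂, hz₁, hz₂ => by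
    have ha := h₁ a List.mem_cons_self
    have hb := h₂ b List.mem_cons_self
    have hab : a.length = b.length := (hlen a ha).trans (hlen b hb).symm
    obtain ⟨ha₁, ha₂⟩ := hz₁.split_of_replicate_suffix (by simpa [hlen a ha] using hpad a ha)
    obtain ⟨hb₁, hb₂⟩ := hz₂.split_of_replicate_suffix (by simpa [hlen b hb] using hpad b hb)
    rw [hab] at ha₁ ha₂
    obtain rfl := hpair a ha b hb _ ha₁ hb₁
    rw [IsZeroPadded.eq_of_produces_flatten hlen hpad hpair (by simpa using hL)
      (fun w hw => h₁ w (List.mem_cons_of_mem _ hw)) (fun w hw => h₂ w (List.mem_cons_of_mem _ hw))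
      ha₂ hb₂]

theorem zero_padded_zero_error_iff_pairwise_general (N K n : ℕ)
    (C : Finset (List ℕ)) (hcode : IsCode N n C) (hpad : IsZeroPadded K n C) :
    IsZeroError N K n C ↔
      ∀ x ∈ C, ∀ y ∈ C, x ≠ y →
        ∀ z : List ℕ, ¬ (Produces K x z ∧ Produces K y z) := by
  constructor
  · rintro ⟨-, hzero⟩ x hx y hy hxy z ⟨hxz, hyz⟩
    exact hzero [x] [y] rfl le_rfl (by simpa) (by simpa) (by simpa) z ⟨by simpa, by simpa⟩
  · refine fun hpair => ⟨hcode, fun L₁ L₂ hL _ h₁ h₂ hne z ⟨hz₁, hz₂⟩ => hne ?_⟩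
    have hunique : ∀ x ∈ C, ∀ y ∈ C, ∀ z, Produces K x z → Produces K y z → x = y :=
      fun x hx y hy z hxz hyz => by_contra fun hxy => hpair x hx y hy hxy z ⟨hxz, hyz⟩
    rw [hpad.eq_of_produces_flatten (fun w hw => (hcode w hw).1) hunique hL h₁ h₂ hz₁ hz₂]

/-- A zero-padded code `C` of length `n` for DTPC(N, K) is zero-error if and only if no
two distinct codewords of `C` can produce the same channel output. -/
theorem zero_padded_zero_error_iff_pairwise (N K n : ℕ) (hN : 1 ≤ N)
    (C : Finset (List ℕ)) (hcode : IsCode N n C) (hpad : IsZeroPadded K n C) :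
    IsZeroError N K n C ↔
      ∀ x ∈ C, ∀ y ∈ C, x ≠ y →
        ∀ z : List ℕ, ¬ (Produces K x z ∧ Produces K y z) :=
  zero_padded_zero_error_iff_pairwise_general N K n C hcode hpad
end

section
/- Let n > K, let u ∈ ℕ^{K+1} have weight q, and let v ∈ ℕ^{n−K−1}. Then the sequence u ∘ v can produce through DTPC(N,K) the output 0^K ∘ q ∘ v ∘ 0^K ∈ ℕ^{n+K}. Consequently, a zero-padded zero-error code of length n > K for DTPC(N,K) cannot contain two distinct codewords of the form u₁ ∘ v and u₂ ∘ v where u₁, u₂ ∈ ℕ^{K+1} have equal weight. -/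
open Finset

theorem Produces.of_delay {K : ℕ} {x z : List ℕ} (δ : ℕ → ℕ) (hδ : ∀ i, δ i ≤ K)
    (hlen : z.length = x.length + K)
    (hz : ∀ t < x.length + K,
      z.getD t 0 = ∑ i ∈ range x.length, if i + δ i = t then x.getD i 0 else 0) :
    Produces K x z := by
  refine ⟨hlen, fun i j => if δ i = j then x.getD i 0 else 0, fun i _ => ?_, fun t ht => ?_⟩
  · simp [Nat.lt_succ_of_le (hδ i)]
  · rw [hz t ht]
    refine sum_congr rfl fun i _ => ?_
    simp_rw [← ite_and, @and_comm (_ + _ = t), ite_and]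
    rw [sum_ite_eq, if_pos (mem_range.2 (Nat.lt_succ_of_le (hδ i)))]

theorem List.sum_range_getD {M : Type*} [AddCommMonoid M] (l : List M) :
    ∑ i ∈ Finset.range l.length, l.getD i 0 = l.sum := by
  rw [← Fin.sum_univ_eq_sum_range, ← Fin.sum_univ_getElem]
  simp

theorem List.getD_append_replicate {α : Type*} (l : List α) (d : α) (m n : ℕ) :
    (l ++ List.replicate m d).getD n d = l.getD n d := by
  grind

theorem produces_append_of_length_eq_succ {K : ℕ} {u : List ℕ} (hu : u.length = K + 1)
    (v : List ℕ) :
    Produces K (u ++ v) (List.replicate K 0 ++ ([u.sum] ++ (v ++ List.replicate K 0))) := by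
  refine .of_delay (K - ·) (fun i => K.sub_le i) (by simp [hu]; omega) fun t _ => ?_
  simp only [add_tsub_eq_max]
  rcases lt_trichotomy K t with hKt | rfl | htK
  · have hv : (List.replicate K 0 ++ ([u.sum] ++ (v ++ List.replicate K 0))).getD t 0 =
        (u ++ v).getD t 0 := by
      obtain ⟨s, rfl⟩ := Nat.exists_eq_add_of_lt hKt
      rw [List.getD_append_right _ _ _ _ (by simp; omega), List.length_replicate,
        show K + s + 1 - K = s + 1 by omega, List.singleton_append, List.getD_cons_succ,
        List.getD_append_replicate, List.getD_append_right _ _ _ _ (by omega), hu,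
        show K + s + 1 - (K + 1) = s by omega]
    rw [hv, sum_congr rfl fun i _ => if_congr (by omega : max i K = t ↔ i = t) rfl rfl,
      sum_ite_eq']
    split_ifs with ht
    · rfl
    · exact List.getD_eq_default _ _ (by simpa using ht)
  · have hK :
        (List.replicate K 0 ++ ([u.sum] ++ (v ++ List.replicate K 0))).getD K 0 = u.sum := by
      simp
    rw [hK, List.length_append, hu, sum_range_add,
      sum_eq_zero (s := range v.length) fun j _ => if_neg (by omega), add_zero,
      ← List.sum_range_getD u, hu]
    refine sum_congr rfl fun i hi => ?_
    have hiK : i < K + 1 := mem_range.1 hi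
    rw [if_pos (by omega), List.getD_append _ _ _ _ (by omega)]
  · rw [List.getD_append _ _ _ _ (by simpa), List.getD_replicate _ htK]
    exact (sum_eq_zero fun i _ => if_neg (by omega)).symm

theorem IsZeroError.eq_of_produces_s17 {N K n : ℕ} {C : Finset (List ℕ)} (hC : IsZeroError N K n C)
    {x y z : List ℕ} (hx : x ∈ C) (hy : y ∈ C) (hxz : Produces K x z) (hyz : Produces K y z) :
    x = y := by
  by_contra hxy
  exact hC.2 [x] [y] rfl le_rfl (by simpa) (by simpa) (by simpa) z ⟨by simpa, by simpa⟩

theorem no_two_codewords_with_equal_weight_prefix_general (N K n : ℕ) :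
    (∀ u v : List ℕ, u.length = K + 1 → v.length = n - K - 1 →
      Produces K (u ++ v)
        (List.replicate K 0 ++ ([u.sum] ++ (v ++ List.replicate K 0)))) ∧
    ∀ C : Finset (List ℕ), IsZeroPadded K n C → IsZeroError N K n C →
      ∀ u₁ u₂ v : List ℕ, u₁.length = K + 1 → u₂.length = K + 1 → u₁.sum = u₂.sum →
        u₁ ++ v ∈ C → u₂ ++ v ∈ C → u₁ = u₂ := by
  refine ⟨fun u v hu _ => produces_append_of_length_eq_succ hu v, ?_⟩
  intro C _ hC u₁ u₂ v hu₁ hu₂ hsum h₁ h₂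
  have h₂z := produces_append_of_length_eq_succ hu₂ v
  rw [← hsum] at h₂z
  exact List.append_cancel_right
    (hC.eq_of_produces_s17 h₁ h₂ (produces_append_of_length_eq_succ hu₁ v) h₂z)

/-- A sequence `u ∘ v` with `u` of length `K+1` and weight `q` can produce the output
`0^K ∘ q ∘ v ∘ 0^K` through DTPC(N, K). Consequently, a zero-padded zero-error code of
length `n > K` cannot contain two distinct codewords `u₁ ∘ v` and `u₂ ∘ v` with
`u₁, u₂` of length `K+1` and of equal weight. -/
theorem no_two_codewords_with_equal_weight_prefix (N K n : ℕ) (hN : 1 ≤ N) (hn : K < n) :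
    (∀ u v : List ℕ, u.length = K + 1 → v.length = n - K - 1 →
      Produces K (u ++ v)
        (List.replicate K 0 ++ ([u.sum] ++ (v ++ List.replicate K 0)))) ∧
    ∀ C : Finset (List ℕ), IsZeroPadded K n C → IsZeroError N K n C →
      ∀ u₁ u₂ v : List ℕ, u₁.length = K + 1 → u₂.length = K + 1 → u₁.sum = u₂.sum →
        u₁ ++ v ∈ C → u₂ ++ v ∈ C → u₁ = u₂ :=
  no_two_codewords_with_equal_weight_prefix_general N K n
end

section
/- Let n > K, let x ∈ C_{N,K}(n), and let y ∈ ℕ^{n+K} be a sequence with x ⤳ y. Put q = y_1 + y_2 + ⋯ + y_{K+1}. If q < N, then (x_1,…,x_{K+1}) = (q, 0, …, 0); and if q ≥ N, then x_1 = N. (This is the correctness of one step of the decoding algorithm for the codes C_{N,K}.) -/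
/-!
Every particle sent in slot `i` arrives in one of the slots `i, …, i + K`. Hence the first
`K + 1` output slots receive all particles of the first input slot and only particles of the
first `K + 1` input slots: `x₁ ≤ q ≤ x₁ + ⋯ + x_{K+1}`. A codeword of `C_{N,K}(n)` either
starts with `N`, giving `q ≥ N`, or starts with `i ∘ 0^K` for some `i < N`, giving `q = i`.
-/

open Finset

theorem List.sum_take_eq_sum_range_ite {M : Type*} [AddCommMonoid M] (l : List M) (m : ℕ) :
    (l.take m).sum = ∑ t ∈ Finset.range l.length, if t < m then l.getD t 0 else 0 := by
  induction l generalizing m with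
  | nil => simp
  | cons a l ih =>
    cases m with
    | zero => simp
    | succ m =>
      simp only [List.take_succ_cons, List.sum_cons, ih, List.length_cons, Finset.sum_range_succ',
        List.getD_cons_succ, List.getD_cons_zero]
      simp [add_comm]

section Produces

variable {K : ℕ} {x y : List ℕ} {d : ℕ → ℕ → ℕ}

theorem sum_take_output_eq_sum_delays (hlen : y.length = x.length + K)
    (hy : ∀ t < x.length + K, y.getD t 0 =
      ∑ i ∈ range x.length, ∑ j ∈ range (K + 1), if i + j = t then d i j else 0) (m : ℕ) :
    (y.take m).sum =
      ∑ i ∈ range x.length, ∑ j ∈ range (K + 1), if i + j < m then d i j else 0 := by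
  rw [List.sum_take_eq_sum_range_ite, hlen]
  calc ∑ t ∈ range (x.length + K), (if t < m then y.getD t 0 else 0)
      = ∑ t ∈ range (x.length + K), ∑ i ∈ range x.length, ∑ j ∈ range (K + 1),
          if i + j = t then (if i + j < m then d i j else 0) else 0 := by
        refine sum_congr rfl fun t ht => ?_
        rw [hy t (mem_range.mp ht)]
        split_ifs with htm
        · exact sum_congr rfl fun i _ => sum_congr rfl fun j _ => by
            split_ifs <;> first | rfl | omega
        · exact (sum_eq_zero fun i _ => sum_eq_zero fun j _ => by
            split_ifs <;> first | rfl | omega).symm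
    _ = _ := by
        rw [sum_comm]
        refine sum_congr rfl fun i hi => ?_
        rw [sum_comm]
        refine sum_congr rfl fun j hj => ?_
        rw [sum_ite_eq, if_pos]
        simp only [mem_range] at hi hj ⊢
        omega

theorem sum_take_input_eq_sum_delays
    (hx : ∀ i < x.length, ∑ j ∈ range (K + 1), d i j = x.getD i 0) (m : ℕ) :
    (x.take m).sum = ∑ i ∈ range x.length, if i < m then ∑ j ∈ range (K + 1), d i j else 0 := by
  rw [List.sum_take_eq_sum_range_ite]
  exact sum_congr rfl fun i hi => by rw [hx i (mem_range.mp hi)]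

theorem Produces.sum_take_output_le (h : Produces K x y) (m : ℕ) :
    (y.take m).sum ≤ (x.take m).sum := by
  obtain ⟨hlen, d, hx, hy⟩ := h
  rw [sum_take_output_eq_sum_delays hlen hy, sum_take_input_eq_sum_delays hx]
  refine sum_le_sum fun i _ => ?_
  split_ifs with him
  · exact sum_le_sum fun j _ => by split_ifs <;> simp
  · exact (sum_eq_zero fun j _ => if_neg (by omega)).le

theorem Produces.sum_take_input_le (h : Produces K x y) (m : ℕ) :
    (x.take m).sum ≤ (y.take (m + K)).sum := by
  obtain ⟨hlen, d, hx, hy⟩ := h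
  rw [sum_take_output_eq_sum_delays hlen hy, sum_take_input_eq_sum_delays hx]
  refine sum_le_sum fun i _ => ?_
  split_ifs with him
  · exact (sum_congr rfl fun j hj => (if_pos (by simp only [mem_range] at hj; omega)).symm).le
  · exact Nat.zero_le _

end Produces

theorem CNK_cases {N K n : ℕ} (hn : K < n) {x : List ℕ} (hx : x ∈ CNK N K n) :
    (∃ v, x = N :: v) ∨ ∃ i < N, ∃ v, x = (i :: List.replicate K 0) ++ v := by
  rw [CNK, dif_neg (by omega)] at hx
  simp only [mem_union, mem_image, mem_biUnion, mem_range] at hx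
  rcases hx with ⟨v, _, rfl⟩ | ⟨i, hi, v, _, rfl⟩
  · exact .inl ⟨v, rfl⟩
  · exact .inr ⟨i, hi, v, rfl⟩

theorem decoding_step_correct_general (N K n : ℕ) (hn : K < n)
    (x : List ℕ) (hx : x ∈ CNK N K n) (y : List ℕ) (hxy : Produces K x y)
    (q : ℕ) (hq : q = (y.take (K + 1)).sum) :
    (q < N → x.take (K + 1) = q :: List.replicate K 0) ∧
      (N ≤ q → x.headI = N) := by
  have hq_le : q ≤ (x.take (K + 1)).sum := hq ▸ hxy.sum_take_output_le (K + 1)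
  have hhead_le : (x.take 1).sum ≤ q := by
    simpa [hq, add_comm] using hxy.sum_take_input_le 1
  rcases CNK_cases hn hx with ⟨v, rfl⟩ | ⟨i, hi, v, rfl⟩
  · simp only [List.take_succ_cons, List.take_zero, List.sum_singleton] at hhead_le
    exact ⟨fun h => absurd hhead_le (by omega), fun _ => rfl⟩
  · have htake : ((i :: List.replicate K 0) ++ v).take (K + 1) = i :: List.replicate K 0 :=
      List.take_left' (by simp)
    simp only [htake, List.sum_cons, List.sum_replicate, smul_zero, add_zero] at hq_le
    simp only [List.cons_append, List.take_succ_cons, List.take_zero,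
      List.sum_singleton] at hhead_le
    have hqi : q = i := by omega
    exact ⟨fun _ => hqi ▸ htake, fun h => absurd h (by omega)⟩

/-- Correctness of one step of the decoding algorithm for the codes `C_{N,K}`:
if `x ∈ C_{N,K}(n)` (`n > K`) produced the output `y` and `q` is the total number of
particles received in the first `K+1` slots, then `q < N` implies that `x` begins with
`q ∘ 0^K`, while `q ≥ N` implies that the first symbol of `x` is `N`. -/
theorem decoding_step_correct (N K n : ℕ) (hN : 1 ≤ N) (hn : K < n)
    (x : List ℕ) (hx : x ∈ CNK N K n) (y : List ℕ) (hxy : Produces K x y)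
    (q : ℕ) (hq : q = (y.take (K + 1)).sum) :
    (q < N → x.take (K + 1) = q :: List.replicate K 0) ∧
      (N ≤ q → x.headI = N) :=
  decoding_step_correct_general N K n hn x hx y hxy q hq
end
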